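/- arXiv:2004.05666 — 7 statements merged into one kernel-verified Lean document; each statement's English description precedes it below -/
import Mathlib

section
/- There exist absolute constants C, c > 0 such that the following holds. Let G be a group and let A ⊆ G be a nonempty finite set with k-tripling. Then A^{±2} = (A ∪ A⁻¹)² ∪ {1} is an m-approximate group for some positive integer m ≤ C·k^c. -/
/-!
The symmetrisation `S = A ∪ A⁻¹` still has small tripling: `S³` is the union of the eight
products `A^{±1} A^{±1} A^{±1}`, each of size at most `k³|A|` by the small-tripling bound for
alternating products, so `|S³| ≤ 8k³|S|`. For a symmetric set of tripling `K` one has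
`|S⁴ S| = |S⁵| ≤ K³|S|`, and Ruzsa's covering lemma covers `S⁴` by at most `K³` left translates
of `S S⁻¹ = S²`. Hence `A^{±2} = S²` is a `512 k⁹`-approximate group.
-/

open Pointwise

def IsApproximateGroup {G : Type*} [Group G] (B : Set G) (m : ℕ) : Prop :=
  1 ∈ B ∧ B⁻¹ = B ∧ ∃ T : Finset G, T.card ≤ m ∧ B * B ⊆ (T : Set G) * B

namespace Finset
variable {G : Type*} [Group G] [DecidableEq G] {A : Finset G} {K : ℝ} {m : ℕ}

lemma pow_union_inv_subset_biUnion :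
    (A ∪ A⁻¹) ^ m ⊆ (Fintype.piFinset fun _ : Fin m ↦ ({1, -1} : Finset ℤ)).biUnion
      fun ε ↦ ((List.finRange m).map fun i ↦ A ^ ε i).prod := by
  intro x hx
  obtain ⟨g, rfl⟩ := mem_pow.1 hx
  have hg i : (g i : G) ∈ A ∨ (g i : G) ∈ A⁻¹ := mem_union.1 (g i).2
  refine mem_biUnion.2 ⟨fun i ↦ if (g i : G) ∈ A then 1 else -1, by simp [apply_ite], ?_⟩
  rw [← List.ofFn_eq_map, mem_prod_list_ofFn]
  refine ⟨fun i ↦ ⟨g i, ?_⟩, rfl⟩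
  dsimp only
  split_ifs with h
  · simpa using h
  · simpa [h] using hg i

lemma card_pow_union_inv_le (hm : 3 ≤ m) (hA : #(A ^ 3) ≤ K * #A) :
    #((A ∪ A⁻¹) ^ m) ≤ 2 ^ m * K ^ (3 * (m - 2)) * #A := by
  calc (#((A ∪ A⁻¹) ^ m) : ℝ)
    _ ≤ ∑ ε ∈ Fintype.piFinset fun _ : Fin m ↦ ({1, -1} : Finset ℤ),
          (#((List.finRange m).map fun i ↦ A ^ ε i).prod : ℝ) :=
      mod_cast (card_le_card pow_union_inv_subset_biUnion).trans card_biUnion_le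
    _ ≤ ∑ _ ∈ Fintype.piFinset fun _ : Fin m ↦ ({1, -1} : Finset ℤ), K ^ (3 * (m - 2)) * #A := by
      refine sum_le_sum fun ε hε ↦ small_alternating_pow_of_small_tripling hm hA ε fun i ↦ ?_
      have := Fintype.mem_piFinset.1 hε i
      simp only [mem_insert, mem_singleton] at this
      rcases this with h | h <;> simp [h]
    _ = 2 ^ m * K ^ (3 * (m - 2)) * #A := by simp [mul_assoc]

end Finset

open Finset in
lemma IsApproximateSubgroup.of_small_tripling_of_nonempty {G : Type*} [Group G] [DecidableEq G]
    {S : Finset G} {K : ℝ} (hS : S.Nonempty) (hSsymm : S⁻¹ = S)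
    (hS3 : #(S ^ 3) ≤ K * #S) : IsApproximateSubgroup (K ^ 3) (S ^ 2 : Set G) where
  one_mem := by
    obtain ⟨a, ha⟩ := hS
    rw [sq, ← mul_inv_cancel a]
    exact Set.mul_mem_mul ha (by rw [← hSsymm, coe_inv]; exact Set.inv_mem_inv.2 ha)
  inv_eq_self := by simp [← inv_pow, hSsymm, ← coe_inv]
  sq_covBySMul := by
    replace hS3 := calc (#(S ^ 4 * S) : ℝ)
      _ = #(S ^ 5) := by rw [← pow_succ]
      _ ≤ K ^ 3 * #S := small_pow_of_small_tripling (by lia) hS3 hSsymm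
    obtain ⟨F, -, hF, hSF⟩ := ruzsa_covering_mul hS hS3
    exact ⟨F, hF, by norm_cast; simpa [div_eq_mul_inv, pow_succ, mul_assoc, hSsymm] using hSF⟩

lemma IsApproximateSubgroup.exists_isApproximateGroup {G : Type*} [Group G] {K : ℝ} {B : Set G}
    (hB : IsApproximateSubgroup K B) : ∃ m : ℕ, 0 < m ∧ (m : ℝ) ≤ K ∧ IsApproximateGroup B m := by
  obtain ⟨F, hF, hBF⟩ := hB.sq_covBySMul
  refine ⟨⌊K⌋₊, Nat.floor_pos.2 hB.one_le, Nat.floor_le (by linarith [hB.one_le]),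
    hB.one_mem, hB.inv_eq_self, F, Nat.le_floor hF, ?_⟩
  simpa [sq] using hBF

/-- **Tao.**  There are absolute constants `C, c > 0` such that if `A` is a nonempty finite
subset of a group `G` with `k`-tripling (`|A³| ≤ k|A|`, `k ≥ 1` real), then
`A^{±2} = (A ∪ A⁻¹)² ∪ {1}` is an `m`-approximate group for some positive `m ≤ C·k^c`. -/
theorem small_tripling_approximate_group :
    ∃ C c : ℝ, 0 < C ∧ 0 < c ∧
      ∀ (G : Type) (_ : Group G) (A : Set G) (k : ℝ), 1 ≤ k → A.Nonempty → A.Finite →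
        ((A * A * A).ncard : ℝ) ≤ k * A.ncard →
        ∃ m : ℕ, 0 < m ∧ (m : ℝ) ≤ C * k ^ c ∧
          IsApproximateGroup ((A ∪ A⁻¹) ^ 2 ∪ {1}) m := by
  classical
  refine ⟨512, 9, by norm_num, by norm_num, fun G _ A k hk hne hfin htrip ↦ ?_⟩
  lift A to Finset G using hfin
  set S := A ∪ A⁻¹
  have hA3 : ((A ^ 3).card : ℝ) ≤ k * A.card := by
    rwa [← Finset.coe_mul, ← Finset.coe_mul, Set.ncard_coe_finset, Set.ncard_coe_finset,
      ← sq, ← pow_succ] at htrip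
  have hS3 : ((S ^ 3).card : ℝ) ≤ 8 * k ^ 3 * S.card := calc
    ((S ^ 3).card : ℝ) ≤ 2 ^ 3 * k ^ (3 * (3 - 2)) * A.card :=
      Finset.card_pow_union_inv_le le_rfl hA3
    _ ≤ 8 * k ^ 3 * S.card := by
      have hk₀ : (0 : ℝ) ≤ k := by linarith
      norm_num only
      gcongr
      exact Finset.subset_union_left (s₂ := A⁻¹)
  have hB := IsApproximateSubgroup.of_small_tripling_of_nonempty
    (hne.mono Finset.subset_union_left) (by ext; simp [or_comm]) hS3
  push_cast [S] at hB
  obtain ⟨m, hm, hmK, hmB⟩ := hB.exists_isApproximateGroup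
  refine ⟨m, hm, hmK.trans_eq ?_, ?_⟩
  · rw [Real.rpow_ofNat]
    ring
  · rwa [Set.union_eq_self_of_subset_right (Set.singleton_subset_iff.2 hB.one_mem)]
end

section
/- For every integer r ≥ 0, every integer c ≥ 1, and every real ε > 0 there is a constant M(r,c,ε) > 0 such that the following holds. Let G be a group and let P = P(u_1,…,u_r;L_1,…,L_r)·H be a coset nilprogression in G of rank r in c-normal form. Then |P| ≤ M(r,c,ε)·|P^{(ε)}|, where P^{(ε)} denotes the coset nilprogression P(u_1,…,u_r; εL_1,…,εL_r)·H. -/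
open Pointwise

/-- Evaluation of a group word: a word is a list of pairs (variable index, inverted?). -/
def wordEval {G : Type*} [Group G] {r : ℕ} (u : Fin r → G) (w : List (Fin r × Bool)) : G :=
  (w.map (fun p => if p.2 then (u p.1)⁻¹ else u p.1)).prod

/-- The generalized (non-commutative) progression `P(u₁,…,u_r; L₁,…,L_r)`. -/
def genProg {G : Type*} [Group G] {r : ℕ} (u : Fin r → G) (L : Fin r → ℝ) : Set G :=
  { x | ∃ w : List (Fin r × Bool),
      (∀ i, ((w.countP (fun p => p.1 == i)) : ℝ) ≤ L i) ∧ x = wordEval u w }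

/-- The sets `c_n(ū)`. -/
def cSet {G : Type*} [Group G] {r : ℕ} (u : Fin r → G) : ℕ → Set G
  | 0 => ∅
  | 1 => Set.range u ∪ Set.range (fun i => (u i)⁻¹)
  | (n+2) => { x | ∃ j k, ∃ _ : j + k = n + 2, ∃ _ : 0 < j, ∃ _ : 0 < k,
      ∃ g ∈ cSet u j, ∃ h ∈ cSet u k, x = g * h * g⁻¹ * h⁻¹ }
  decreasing_by all_goals omega

/-- The ordered product `u₁^{n₁} ⋯ u_r^{n_r}`. -/
def orderedProd {G : Type*} [Group G] {r : ℕ} (u : Fin r → G) (n : Fin r → ℤ) : G :=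
  (List.ofFn (fun i => u i ^ n i)).prod

/-- The bound function for the tail progression `P(u_{j+1},…,u_r; cL_{j+1}/(L_iL_j),…)`. -/
noncomputable def tailL {r : ℕ} (L : Fin r → ℝ) (c : ℕ) (i j : Fin r) : Fin r → ℝ :=
  fun t => if j < t then (c * L t) / (L i * L j) else 0

/-- The coset nilprogression `genProg u L * H` is in `c`-normal form (conditions stated
"mod `H`", matching the conditions for the induced nilprogression in the quotient). -/
def InCNormalFormMod {G : Type*} [Group G] {r : ℕ} (u : Fin r → G) (L : Fin r → ℝ)
    (H : Subgroup G) (c : ℕ) : Prop :=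
  (∀ i j : Fin r, i < j → ∀ b₁ b₂ : Bool,
      (fun g h => g * h * g⁻¹ * h⁻¹) (if b₁ then (u i)⁻¹ else u i) (if b₂ then (u j)⁻¹ else u j)
        ∈ genProg u (tailL L c i j) * (H : Set G)) ∧
  (∀ n m : Fin r → ℤ, (∀ i, (|n i| : ℝ) ≤ L i / c) → (∀ i, (|m i| : ℝ) ≤ L i / c) →
      (orderedProd u n)⁻¹ * orderedProd u m ∈ H → n = m) ∧
  ((1 / c : ℝ) * ∏ i, ((2 * ⌊L i⌋ + 1 : ℤ) : ℝ) ≤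
      ((genProg u L * (H : Set G)).ncard : ℝ) / (H : Set G).ncard ∧
    ((genProg u L * (H : Set G)).ncard : ℝ) / (H : Set G).ncard ≤
      (c : ℝ) * ∏ i, ((2 * ⌊L i⌋ + 1 : ℤ) : ℝ))


section Aux
variable {G : Type*} [Group G] {r : ℕ}

lemma length_eq_sum_countP (w : List (Fin r × Bool)) :
    w.length = ∑ i : Fin r, w.countP (fun p => p.1 == i) := by
  induction w with
  | nil => simp
  | cons a w ih =>
    simp only [List.countP_cons, List.length_cons, Finset.sum_add_distrib, ← ih]
    have : ∑ i : Fin r, (if (a.1 == i) = true then 1 else 0) = 1 := by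
      simp [beq_iff_eq]
    omega

lemma genProg_finite (u : Fin r → G) (L : Fin r → ℝ) : (genProg u L).Finite := by
  have hsub : genProg u L ⊆ wordEval u '' {w | w.length ≤ ∑ i : Fin r, ⌊L i⌋₊} := by
    rintro x ⟨w, hw, rfl⟩
    refine ⟨w, ?_, rfl⟩
    rw [Set.mem_setOf_eq, length_eq_sum_countP]
    exact Finset.sum_le_sum fun i _ => Nat.le_floor (hw i)
  exact ((List.finite_length_le _ _).image _).subset hsub

lemma pow_natAbs_eq (g : G) (n : ℤ) : (if n < 0 then g⁻¹ else g) ^ n.natAbs = g ^ n := by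
  rcases lt_or_ge n 0 with h | h
  · rw [if_pos h, inv_pow, ← zpow_natCast, ← zpow_neg]
    congr 1
    omega
  · rw [if_neg (not_lt.mpr h), ← zpow_natCast]
    congr 1
    omega

lemma orderedProd_mem (u : Fin r → G) (L' : Fin r → ℝ) (n : Fin r → ℤ)
    (h : ∀ i, (|n i| : ℝ) ≤ L' i) : orderedProd u n ∈ genProg u L' := by
  refine ⟨(List.ofFn fun i => List.replicate (n i).natAbs (i, decide (n i < 0))).flatten, ?_, ?_⟩
  · intro i
    have : (List.ofFn fun j => List.replicate (n j).natAbs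
        ((j : Fin r), decide (n j < 0))).flatten.countP (fun p => p.1 == i) = (n i).natAbs := by
      rw [List.countP_flatten, List.map_ofFn, List.sum_ofFn]
      have : ∀ j : Fin r, ((List.countP (fun p => p.1 == i)) ∘
          (fun j => List.replicate (n j).natAbs ((j : Fin r), decide (n j < 0)))) j
          = if j = i then (n j).natAbs else 0 := by
        intro j
        simp [List.countP_replicate, beq_iff_eq]
      rw [Finset.sum_congr rfl fun j _ => this j, Finset.sum_ite_eq' (Finset.univ) i]
      simp
    rw [this, Nat.cast_natAbs, Int.cast_abs]
    exact h i
  · rw [wordEval, List.map_flatten, List.prod_flatten, List.map_ofFn, List.map_ofFn, orderedProd]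
    refine congrArg List.prod (congrArg List.ofFn (funext fun j => ?_))
    simp only [Function.comp]
    rw [List.map_replicate, List.prod_replicate]
    simp only [decide_eq_true_eq]
    exact (pow_natAbs_eq (u j) (n j)).symm

lemma key_ineq {L δ : ℝ} (hL : 0 < L) (hδ : 0 < δ) (hδ1 : δ ≤ 1) :
    ((2 * ⌊L⌋ + 1 : ℤ) : ℝ) ≤ (3 / δ) * ((2 * ⌊δ * L⌋ + 1 : ℤ) : ℝ) := by
  have h1 : (⌊L⌋ : ℝ) ≤ L := Int.floor_le L
  have h2 : δ * L - 1 < (⌊δ * L⌋ : ℝ) := Int.sub_one_lt_floor _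
  have hδL : 0 < δ * L := by positivity
  push_cast
  rw [div_mul_eq_mul_div, le_div_iff₀ hδ]
  rcases lt_or_ge (δ * L) 1 with h | h
  · have h3 : (0 : ℝ) ≤ (⌊δ * L⌋ : ℝ) := by
      exact_mod_cast Int.floor_nonneg.mpr hδL.le
    nlinarith [mul_le_mul_of_nonneg_right h1 hδ.le]
  · have hL1 : δ * L ≤ L := by nlinarith
    nlinarith [mul_le_mul_of_nonneg_right h1 hδ.le]

end Aux


/-- **Scaling of coset nilprogressions (BGT, Lemma C.1).**  For every `r ≥ 0`, `c ≥ 1`,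
`ε > 0` there is `M(r,c,ε) > 0` such that for any coset nilprogression
`P = P(u;L)·H` of rank `r` in `c`-normal form one has `|P| ≤ M(r,c,ε)·|P^{(ε)}|`, where
`P^{(ε)} = P(u; εL)·H`. -/
theorem coset_nilprogression_scaling :
    ∀ (r c : ℕ), 1 ≤ c → ∀ ε : ℝ, 0 < ε → ∃ M : ℝ, 0 < M ∧
      ∀ (G : Type) (_ : Group G) (u : Fin r → G) (L : Fin r → ℝ) (H : Subgroup G) (s : ℕ),
        (∀ i, 0 < L i) →
        cSet u (s + 1) = {1} →
        (H : Set G).Finite →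
        (∀ x ∈ genProg u L, ∀ h ∈ H, x * h * x⁻¹ ∈ H) →
        InCNormalFormMod u L H c →
        ((genProg u L * (H : Set G)).ncard : ℝ) ≤
          M * ((genProg u (fun i => ε * L i) * (H : Set G)).ncard : ℝ) := by
  intro r c hc ε hε
  have hcR : (1 : ℝ) ≤ (c : ℝ) := by exact_mod_cast hc
  have hcpos : (0 : ℝ) < c := by linarith
  set δ : ℝ := min ε (1 / c) with hδdef
  have hδpos : 0 < δ := lt_min hε (by positivity)
  have hδ1 : δ ≤ 1 := le_trans (min_le_right _ _) (by rw [div_le_one hcpos]; exact hcR)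
  refine ⟨c * (3 / δ) ^ r, mul_pos hcpos (pow_pos (by positivity) r), ?_⟩
  intro G _ u L H s hL _hcSet hHfin _hnorm hNF
  classical
  have hHne : (H : Set G).Nonempty := ⟨1, one_mem _⟩
  have hHpos : (0 : ℝ) < (H : Set G).ncard := by
    exact_mod_cast (Set.ncard_pos hHfin).mpr hHne
  have hPεfin : (genProg u (fun i => ε * L i) * (H : Set G)).Finite :=
    (genProg_finite u _).mul hHfin
  -- upper bound from normal form
  have h_up := hNF.2.2.2
  have hPn : ((genProg u L * (H : Set G)).ncard : ℝ) ≤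
      (c : ℝ) * (∏ i, ((2 * ⌊L i⌋ + 1 : ℤ) : ℝ)) * (H : Set G).ncard := by
    rw [div_le_iff₀ hHpos] at h_up
    exact h_up
  -- the box of exponents
  set k : Fin r → ℤ := fun i => ⌊δ * L i⌋ with hkdef
  have hk0 : ∀ i, 0 ≤ k i := fun i => Int.floor_nonneg.mpr (mul_nonneg hδpos.le (hL i).le)
  set B : Finset (Fin r → ℤ) := Fintype.piFinset fun i => Finset.Icc (-(k i)) (k i) with hBdef
  have hBcard : (B.card : ℝ) = ∏ i, ((2 * k i + 1 : ℤ) : ℝ) := by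
    rw [hBdef, Fintype.card_piFinset, Nat.cast_prod]
    refine Finset.prod_congr rfl fun i _ => ?_
    rw [Int.card_Icc]
    have h1 : ((k i + 1 - -(k i)).toNat : ℤ) = 2 * k i + 1 := by have := hk0 i; omega
    rw [← h1]
    exact (Int.cast_natCast _).symm
  have hBbound : ∀ n : Fin r → ℤ, n ∈ B → ∀ i, |((n i : ℤ) : ℝ)| ≤ δ * L i := by
    intro n hn i
    rw [hBdef, Fintype.mem_piFinset] at hn
    have := hn i
    rw [Finset.mem_Icc] at this
    have habs : |n i| ≤ k i := abs_le.mpr ⟨by omega, this.2⟩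
    calc |((n i : ℤ) : ℝ)| = ((|n i| : ℤ) : ℝ) := by rw [Int.cast_abs]
    _ ≤ ((k i : ℤ) : ℝ) := by exact_mod_cast habs
    _ ≤ δ * L i := Int.floor_le _
  have hδε : ∀ i, δ * L i ≤ ε * L i := fun i =>
    mul_le_mul_of_nonneg_right (min_le_left _ _) (hL i).le
  have hδc : ∀ i, δ * L i ≤ L i / c := fun i => by
    have : δ * L i ≤ (1 / c) * L i :=
      mul_le_mul_of_nonneg_right (min_le_right _ _) (hL i).le
    calc δ * L i ≤ (1 / c) * L i := this
    _ = L i / c := by ring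
  -- the injection
  set Hf : Finset G := hHfin.toFinset with hHfdef
  set f : (Fin r → ℤ) × G → G := fun p => orderedProd u p.1 * p.2 with hfdef
  have hinj : Set.InjOn f ↑(B ×ˢ Hf) := by
    rintro ⟨n, h⟩ hmem ⟨m, h'⟩ hmem' heq
    rw [Finset.coe_product, Set.mem_prod] at hmem hmem'
    have hnB : n ∈ B := by exact_mod_cast hmem.1
    have hmB : m ∈ B := by exact_mod_cast hmem'.1
    have hhH : h ∈ H := by have := hmem.2; rwa [hHfdef, Set.Finite.coe_toFinset] at this
    have hh'H : h' ∈ H := by have := hmem'.2; rwa [hHfdef, Set.Finite.coe_toFinset] at this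
    have heq' : orderedProd u n * h = orderedProd u m * h' := heq
    have hmemH : (orderedProd u n)⁻¹ * orderedProd u m ∈ H := by
      have h2 : orderedProd u m = orderedProd u n * h * h'⁻¹ := by
        rw [heq']; group
      have h3 : (orderedProd u n)⁻¹ * orderedProd u m = h * h'⁻¹ := by
        rw [h2]; group
      rw [h3]
      exact H.mul_mem hhH (H.inv_mem hh'H)
    have hnm : n = m := hNF.2.1 n m
      (fun i => le_trans (hBbound n hnB i) (hδc i))
      (fun i => le_trans (hBbound m hmB i) (hδc i)) hmemH
    subst hnm
    have : h = h' := by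
      have := mul_left_cancel heq'
      exact this
    simp [this]
  have hsub : ↑((B ×ˢ Hf).image f) ⊆ genProg u (fun i => ε * L i) * (H : Set G) := by
    intro x hx
    rw [Finset.coe_image] at hx
    obtain ⟨⟨n, h⟩, hmem, rfl⟩ := hx
    rw [Finset.coe_product, Set.mem_prod] at hmem
    have hnB : n ∈ B := by exact_mod_cast hmem.1
    have hhH : h ∈ (H : Set G) := by
      have := hmem.2; rwa [hHfdef, Set.Finite.coe_toFinset] at this
    exact Set.mul_mem_mul
      (orderedProd_mem u _ n fun i => le_trans (hBbound n hnB i) (hδε i)) hhH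
  have hlow : (B.card : ℝ) * (H : Set G).ncard ≤
      ((genProg u (fun i => ε * L i) * (H : Set G)).ncard : ℝ) := by
    have h1 := Set.ncard_le_ncard hsub hPεfin
    rw [Set.ncard_coe_finset, Finset.card_image_of_injOn hinj, Finset.card_product] at h1
    have h2 : (H : Set G).ncard = Hf.card := Set.ncard_eq_toFinset_card _ hHfin
    rw [h2]
    exact_mod_cast h1
  -- combine
  have hprod : (∏ i, ((2 * ⌊L i⌋ + 1 : ℤ) : ℝ)) ≤ (3 / δ) ^ r * ∏ i, ((2 * k i + 1 : ℤ) : ℝ) := by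
    have := Finset.prod_le_prod (s := Finset.univ)
      (f := fun i => ((2 * ⌊L i⌋ + 1 : ℤ) : ℝ))
      (g := fun i => (3 / δ) * ((2 * k i + 1 : ℤ) : ℝ))
      (fun i _ => by
        have h4 : (0:ℤ) ≤ 2 * ⌊L i⌋ + 1 := by
          have := Int.floor_nonneg.mpr (hL i).le; omega
        show (0:ℝ) ≤ ((2 * ⌊L i⌋ + 1 : ℤ) : ℝ)
        exact_mod_cast h4)
      (fun i _ => key_ineq (hL i) hδpos hδ1)
    calc (∏ i, ((2 * ⌊L i⌋ + 1 : ℤ) : ℝ))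
        ≤ ∏ i, (3 / δ) * ((2 * k i + 1 : ℤ) : ℝ) := this
      _ = (3 / δ) ^ r * ∏ i, ((2 * k i + 1 : ℤ) : ℝ) := by
          rw [Finset.prod_mul_distrib, Finset.prod_const, Finset.card_univ, Fintype.card_fin]
  calc ((genProg u L * (H : Set G)).ncard : ℝ)
      ≤ (c : ℝ) * (∏ i, ((2 * ⌊L i⌋ + 1 : ℤ) : ℝ)) * (H : Set G).ncard := hPn
    _ ≤ (c : ℝ) * ((3 / δ) ^ r * ∏ i, ((2 * k i + 1 : ℤ) : ℝ)) * (H : Set G).ncard := by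
        exact mul_le_mul_of_nonneg_right
          (mul_le_mul_of_nonneg_left hprod hcpos.le) hHpos.le
    _ = (c : ℝ) * (3 / δ) ^ r * ((B.card : ℝ) * (H : Set G).ncard) := by
        rw [hBcard]; ring
    _ ≤ (c : ℝ) * (3 / δ) ^ r * ((genProg u (fun i => ε * L i) * (H : Set G)).ncard : ℝ) := by
        have : (0:ℝ) < (c : ℝ) * (3 / δ) ^ r := by positivity
        exact mul_le_mul_of_nonneg_left hlow this.le
end

section
/- Let X be a set, let d ≥ 1 be an integer, and let S_1 and S_2 be families of subsets of X, each of VC-dimension at most d. Then the family S = {S_1 ∩ S_2 : S_1 ∈ S_1, S_2 ∈ S_2} has VC-dimension strictly less than 10d. -/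
/-- A family `𝒮` of subsets of `X` shatters a finite set `A ⊆ X` if every subset of `A`
is of the form `A ∩ s` for some `s ∈ 𝒮`. -/
def SetFamily.Shatters {X : Type*} (𝒮 : Set (Set X)) (A : Finset X) : Prop :=
  ∀ B : Finset X, B ⊆ A → ∃ s ∈ 𝒮, (A : Set X) ∩ s = (B : Set X)

/-- The family `𝒮` has VC-dimension at most `d`: every finite shattered set has size ≤ `d`. -/
def SetFamily.VCDimLE {X : Type*} (𝒮 : Set (Set X)) (d : ℕ) : Prop :=
  ∀ A : Finset X, SetFamily.Shatters 𝒮 A → A.card ≤ d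

/-- Any finite family of traces of `𝒮` on `A` has size at most `∑_{k ≤ d} C(#A, k)`
when `𝒮` has VC-dimension at most `d` (Sauer–Shelah). -/
lemma trace_card_le {X : Type*} [DecidableEq X] {𝒮 : Set (Set X)} {d : ℕ}
    (h : SetFamily.VCDimLE 𝒮 d) (A : Finset X) (𝒜 : Finset (Finset X))
    (h𝒜 : ∀ u ∈ 𝒜, u ⊆ A ∧ ∃ s ∈ 𝒮, (A : Set X) ∩ s = (u : Set X)) :
    𝒜.card ≤ ∑ k ∈ Finset.Iic d, (A.card).choose k := by
  refine (Finset.card_le_card_shatterer 𝒜).trans ?_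
  have hsub : 𝒜.shatterer ⊆ (Finset.Iic d).biUnion (fun k => Finset.powersetCard k A) := by
    intro s hs
    rw [Finset.mem_shatterer] at hs
    obtain ⟨u, hu, hsu⟩ := hs.exists_superset
    have hsA : s ⊆ A := hsu.trans (h𝒜 u hu).1
    have hshat : SetFamily.Shatters 𝒮 s := by
      intro B hB
      obtain ⟨v, hv, hv'⟩ := hs hB
      obtain ⟨t, ht, htv⟩ := (h𝒜 v hv).2
      refine ⟨t, ht, ?_⟩
      calc (s : Set X) ∩ t = ((s : Set X) ∩ (A : Set X)) ∩ t := by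
            congr 1
            exact (Set.inter_eq_left.2 (Finset.coe_subset.2 hsA)).symm
        _ = (s : Set X) ∩ ((A : Set X) ∩ t) := by rw [Set.inter_assoc]
        _ = (s : Set X) ∩ (v : Set X) := by rw [htv]
        _ = ((s ∩ v : Finset X) : Set X) := by rw [Finset.coe_inter]
        _ = (B : Set X) := by rw [hv']
    refine Finset.mem_biUnion.2 ⟨s.card, Finset.mem_Iic.2 (h s hshat), ?_⟩
    exact Finset.mem_powersetCard.2 ⟨hsA, rfl⟩
  refine (Finset.card_le_card hsub).trans ?_
  refine Finset.card_biUnion_le.trans ?_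
  refine Finset.sum_le_sum fun k _ => ?_
  rw [Finset.card_powersetCard]

lemma sum_choose_bound (n d : ℕ) (hdn : d ≤ n) :
    (∑ k ∈ Finset.Iic d, n.choose k) * 8 ^ (n - d) ≤ 9 ^ n := by
  have h9 : (9 : ℕ) ^ n = ∑ k ∈ Finset.range (n + 1), 8 ^ (n - k) * n.choose k := by
    have := add_pow (1 : ℕ) 8 n
    norm_num at this
    simpa using this
  rw [h9, Finset.sum_mul]
  calc ∑ k ∈ Finset.Iic d, n.choose k * 8 ^ (n - d)
      ≤ ∑ k ∈ Finset.Iic d, 8 ^ (n - k) * n.choose k := by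
        refine Finset.sum_le_sum fun k hk => ?_
        simp only [Finset.mem_Iic] at hk
        rw [mul_comm]
        exact Nat.mul_le_mul_right _
          (Nat.pow_le_pow_right (by norm_num) (by omega))
    _ ≤ ∑ k ∈ Finset.range (n + 1), 8 ^ (n - k) * n.choose k := by
        refine Finset.sum_le_sum_of_subset fun k hk => ?_
        simp only [Finset.mem_Iic] at hk
        simp only [Finset.mem_range]
        omega

lemma arith_contra {n d S : ℕ} (hd : 1 ≤ d) (hn : 10 * d ≤ n)
    (hS : S * 8 ^ (n - d) ≤ 9 ^ n) (h2 : 2 ^ n ≤ S * S) : False := by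
  have hdn : d ≤ n := by omega
  have key : (2 : ℕ) ^ (7 * n - 6 * d) ≤ 3 ^ (4 * n) := by
    have h1 : 2 ^ n * (8 ^ (n - d)) ^ 2 ≤ (9 ^ n) ^ 2 := by
      calc 2 ^ n * (8 ^ (n - d)) ^ 2 ≤ (S * S) * (8 ^ (n - d)) ^ 2 :=
            Nat.mul_le_mul_right _ h2
        _ = (S * 8 ^ (n - d)) ^ 2 := by ring
        _ ≤ (9 ^ n) ^ 2 := Nat.pow_le_pow_left hS 2
    have hL : 2 ^ n * (8 ^ (n - d)) ^ 2 = 2 ^ (7 * n - 6 * d) := by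
      have h8 : (8 : ℕ) = 2 ^ 3 := by norm_num
      rw [h8, ← pow_mul, ← pow_mul, ← pow_add]
      congr 1
      omega
    have hR : ((9 : ℕ) ^ n) ^ 2 = 3 ^ (4 * n) := by
      have h9 : (9 : ℕ) = 3 ^ 2 := by norm_num
      rw [h9, ← pow_mul, ← pow_mul]
      congr 1
      ring
    rw [hL, hR] at h1
    exact h1
  have key10 : (2 : ℕ) ^ ((7 * n - 6 * d) * 10) ≤ 3 ^ (40 * n) := by
    calc (2 : ℕ) ^ ((7 * n - 6 * d) * 10) = ((2 : ℕ) ^ (7 * n - 6 * d)) ^ 10 := by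
          rw [pow_mul]
      _ ≤ ((3 : ℕ) ^ (4 * n)) ^ 10 := Nat.pow_le_pow_left key 10
      _ = 3 ^ (40 * n) := by rw [← pow_mul]; congr 1; ring
  have hlt : (3 : ℕ) ^ (40 * n) < 2 ^ (64 * n) := by
    have h340 : (3 : ℕ) ^ 40 < 2 ^ 64 := by norm_num
    calc (3 : ℕ) ^ (40 * n) = ((3 : ℕ) ^ 40) ^ n := by rw [← pow_mul]
      _ < ((2 : ℕ) ^ 64) ^ n := Nat.pow_lt_pow_left h340 (by omega)
      _ = 2 ^ (64 * n) := by rw [← pow_mul]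
  have hexp : 64 * n ≤ (7 * n - 6 * d) * 10 := by omega
  have : (2 : ℕ) ^ (64 * n) ≤ 2 ^ ((7 * n - 6 * d) * 10) :=
    Nat.pow_le_pow_right (by norm_num) hexp
  omega

/-- If `𝒮₁` and `𝒮₂` both have VC-dimension at most `d ≥ 1`, then the family of pairwise
intersections `{s₁ ∩ s₂ : s₁ ∈ 𝒮₁, s₂ ∈ 𝒮₂}` has VC-dimension strictly less than `10d`. -/
theorem vc_dimension_of_intersections {X : Type*} (d : ℕ) (hd : 1 ≤ d)
    (𝒮₁ 𝒮₂ : Set (Set X)) (h₁ : SetFamily.VCDimLE 𝒮₁ d) (h₂ : SetFamily.VCDimLE 𝒮₂ d) :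
    ∀ A : Finset X,
      SetFamily.Shatters { s : Set X | ∃ s₁ ∈ 𝒮₁, ∃ s₂ ∈ 𝒮₂, s = s₁ ∩ s₂ } A →
      A.card < 10 * d := by
  classical
  intro A hA
  by_contra hcon
  push_neg at hcon
  set n := A.card with hn
  have hdn : d ≤ n := by omega
  -- the trace families
  set 𝒜₁ : Finset (Finset X) :=
    A.powerset.filter (fun u => ∃ s ∈ 𝒮₁, (A : Set X) ∩ s = (u : Set X)) with h𝒜₁
  set 𝒜₂ : Finset (Finset X) :=
    A.powerset.filter (fun u => ∃ s ∈ 𝒮₂, (A : Set X) ∩ s = (u : Set X)) with h𝒜₂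
  have hmem₁ : ∀ u ∈ 𝒜₁, u ⊆ A ∧ ∃ s ∈ 𝒮₁, (A : Set X) ∩ s = (u : Set X) := by
    intro u hu
    rw [h𝒜₁, Finset.mem_filter, Finset.mem_powerset] at hu
    exact hu
  have hmem₂ : ∀ u ∈ 𝒜₂, u ⊆ A ∧ ∃ s ∈ 𝒮₂, (A : Set X) ∩ s = (u : Set X) := by
    intro u hu
    rw [h𝒜₂, Finset.mem_filter, Finset.mem_powerset] at hu
    exact hu
  -- every subset of A is an intersection of a trace from 𝒜₁ and one from 𝒜₂
  have hsurj : Set.SurjOn (fun p : Finset X × Finset X => p.1 ∩ p.2)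
      ((𝒜₁ ×ˢ 𝒜₂ : Finset (Finset X × Finset X)) : Set (Finset X × Finset X))
      (A.powerset : Set (Finset X)) := by
    intro B hB
    simp only [Finset.coe_powerset, Set.mem_preimage, Set.mem_powerset_iff] at hB
    have hBA : B ⊆ A := by exact_mod_cast hB
    obtain ⟨s, hs, hsB⟩ := hA B hBA
    obtain ⟨s₁, hs₁, s₂, hs₂, rfl⟩ := hs
    set t₁ : Finset X := A.filter (· ∈ s₁) with ht₁
    set t₂ : Finset X := A.filter (· ∈ s₂) with ht₂
    have hc₁ : (A : Set X) ∩ s₁ = (t₁ : Set X) := by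
      rw [ht₁]; ext x; simp [Set.mem_inter_iff]
    have hc₂ : (A : Set X) ∩ s₂ = (t₂ : Set X) := by
      rw [ht₂]; ext x; simp [Set.mem_inter_iff]
    have ht₁m : t₁ ∈ 𝒜₁ := by
      rw [h𝒜₁, Finset.mem_filter, Finset.mem_powerset]
      exact ⟨Finset.filter_subset _ _, s₁, hs₁, hc₁⟩
    have ht₂m : t₂ ∈ 𝒜₂ := by
      rw [h𝒜₂, Finset.mem_filter, Finset.mem_powerset]
      exact ⟨Finset.filter_subset _ _, s₂, hs₂, hc₂⟩
    refine ⟨(t₁, t₂), ?_, ?_⟩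
    · simp only [Finset.coe_product, Set.mem_prod]
      exact ⟨by exact_mod_cast ht₁m, by exact_mod_cast ht₂m⟩
    · have : ((t₁ ∩ t₂ : Finset X) : Set X) = (B : Set X) := by
        rw [Finset.coe_inter, ← hc₁, ← hc₂, ← hsB]
        ext x; simp [Set.mem_inter_iff]; tauto
      exact_mod_cast this
  have hcount : 2 ^ n ≤ 𝒜₁.card * 𝒜₂.card := by
    calc 2 ^ n = A.powerset.card := (Finset.card_powerset A).symm
      _ ≤ (𝒜₁ ×ˢ 𝒜₂).card := Finset.card_le_card_of_surjOn _ hsurj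
      _ = 𝒜₁.card * 𝒜₂.card := Finset.card_product _ _
  set S := ∑ k ∈ Finset.Iic d, n.choose k with hSdef
  have hS₁ : 𝒜₁.card ≤ S := trace_card_le h₁ A 𝒜₁ hmem₁
  have hS₂ : 𝒜₂.card ≤ S := trace_card_le h₂ A 𝒜₂ hmem₂
  have h2 : 2 ^ n ≤ S * S := hcount.trans (Nat.mul_le_mul hS₁ hS₂)
  exact arith_contra hd hcon (sum_choose_bound n d hdn) h2
end

section
/- For every integer d ≥ 1 there exist constants C(d), c(d) > 0 such that the following holds. Let G be a group and let A ⊆ G be a nonempty finite d-NIP set with k-tripling. Then there exist sets E, F ⊆ A^{±3} with |E|, |F| ≤ C(d)·k^{c(d)} such that A^{±2} ⊆ EA ∩ AF. In particular, (A^{±1})² is covered by at most C(d)·k^{c(d)} left translates of A^{±1}, so A^{±1} is an m-approximate group for some m ≤ C(d)·k^{c(d)}. -/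
open Pointwise

/-- A subset `A` of a group `G` is `d`-NIP if there are no `x₁,…,x_d ∈ G` and
`(g_S)_{S ⊆ [d]}` in `G` with `g_S · xᵢ ∈ A ↔ i ∈ S`. -/
def IsNIPSet {G : Type*} [Group G] (A : Set G) (d : ℕ) : Prop :=
  ¬ ∃ (x : Fin d → G) (g : Finset (Fin d) → G),
      ∀ (S : Finset (Fin d)) (i : Fin d), g S * x i ∈ A ↔ i ∈ S

/-- `A^{±n} = (A ∪ A⁻¹)^n ∪ {1}`. -/
def pmPow {G : Type*} [Group G] (A : Set G) (n : ℕ) : Set G :=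
  (A ∪ A⁻¹) ^ n ∪ {1}

/-!
The translates `x • A⁻¹`, `x ∈ A^{±2}`, have `|A|` elements and lie in `A^{±3}`, which by
small tripling has at most `8k³|A|` elements; and a shattered set of size `2^d` for this
family would be a `d`-independence pattern for `A`, so its VC-dimension is `< 2^d`. A set `E`
meeting every `x • A⁻¹` is exactly one with `A^{±2} ⊆ EA`, and an `ε`-net with `ε = 1/(8k³)`
gives one of size polynomial in `k`. The right cover is the left cover of `A⁻¹`.

The `ε`-net theorem is proved by double sampling. Draw `r` blocks of `b` points of the ground
set. If the sample misses a member `s` with `|s| ≥ ε|U|`, an independent second sample meets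
`s` in every block with probability at least `1/2` (Bernoulli's inequality), so missing some
member is at most twice as likely as the pair separating one: the first sample misses it and
the second meets it in every block. Conditioned on the `2rb` points drawn, only the
`(2rb+1)^{vcDim}` traces matter, and each of them is separated by at most a `2^{-r}` fraction
of the coordinatewise swaps of the two samples, since a separating swap is forced in one
coordinate of every block.
-/

open Finset

namespace Finset
variable {α : Type*} [DecidableEq α] {𝒜 : Finset (Finset α)} {s : Finset α}

lemma Shatters.exists_mem_iff_of_card_le {ι κ : Type*} [Fintype ι] (h : 𝒜.Shatters s)
    (hs : Fintype.card ι ≤ #s) (P : κ → ι → Prop) :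
    ∃ (y : ι → α) (u : κ → Finset α), (∀ k, u k ∈ 𝒜) ∧ ∀ k i, y i ∈ u k ↔ P k i := by
  classical
  obtain ⟨y⟩ := Function.Embedding.nonempty_of_card_le (hs.trans_eq (Fintype.card_coe s).symm)
  have hy i : (y i : α) ∈ s := (y i).2
  have key k : ∃ u ∈ 𝒜, s ∩ u = (univ.filter (P k)).map (y.trans (.subtype _)) := h <| by
    rintro _ hx
    obtain ⟨i, -, rfl⟩ := mem_map.1 hx
    exact hy i
  choose u hu hsu using key
  refine ⟨fun i => y i, u, hu, fun k i => ?_⟩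
  simpa [hy i, Subtype.val_injective.eq_iff] using Finset.ext_iff.1 (hsu k) (y i)

lemma card_image_inter_le_pow_vcDim (𝒜 : Finset (Finset α)) (Y : Finset α) :
    #(𝒜.image (· ∩ Y)) ≤ (#Y + 1) ^ 𝒜.vcDim := by
  set n := 𝒜.vcDim
  have hsub : (𝒜.image (· ∩ Y)).shatterer ⊆ (range (n + 1)).biUnion (Y.powersetCard ·) := by
    intro s hs
    have hs := mem_shatterer.1 hs
    have hsY : s ⊆ Y := by
      obtain ⟨_, hu, hsu⟩ := hs.exists_superset
      obtain ⟨u, -, rfl⟩ := mem_image.1 hu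
      exact hsu.trans inter_subset_right
    have h𝒜s : 𝒜.Shatters s := fun t ht => by
      obtain ⟨_, hv, rfl⟩ := hs ht
      obtain ⟨u, hu, rfl⟩ := mem_image.1 hv
      exact ⟨u, hu, by rw [← inter_assoc, inter_right_comm, inter_eq_left.2 hsY]⟩
    exact mem_biUnion.2 ⟨#s, mem_range.2 (Nat.lt_succ_of_le h𝒜s.card_le_vcDim),
      mem_powersetCard.2 ⟨hsY, rfl⟩⟩
  calc #(𝒜.image (· ∩ Y)) ≤ #(𝒜.image (· ∩ Y)).shatterer := card_le_card_shatterer _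
    _ ≤ ∑ j ∈ range (n + 1), #(Y.powersetCard j) := (card_le_card hsub).trans card_biUnion_le
    _ ≤ ∑ j ∈ range (n + 1), #Y ^ j * 1 ^ (n - j) * n.choose j := by
      refine sum_le_sum fun j hj => ?_
      rw [card_powersetCard, one_pow, mul_one]
      exact (Nat.choose_le_pow _ _).trans
        (Nat.le_mul_of_pos_right _ (Nat.choose_pos (Nat.lt_succ_iff.1 (mem_range.1 hj))))
    _ = (#Y + 1) ^ n := (add_pow _ _ _).symm

end Finset

section SwapCounting
variable {β : Type*} {r b : ℕ}

def swapBy (σ : Fin r → Fin b → Bool) (p : (Fin r → Fin b → β) × (Fin r → Fin b → β)) :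
    (Fin r → Fin b → β) × (Fin r → Fin b → β) :=
  (fun c j => bif σ c j then p.2 c j else p.1 c j, fun c j => bif σ c j then p.1 c j else p.2 c j)

lemma swapBy_involutive (σ : Fin r → Fin b → Bool) :
    Function.Involutive (swapBy (β := β) σ) := by
  rintro ⟨u, v⟩
  simp only [swapBy, Prod.mk.injEq]
  constructor <;> funext c j <;> cases σ c j <;> rfl

lemma card_filter_swapBy [Fintype β] (σ : Fin r → Fin b → Bool)
    (P : (Fin r → Fin b → β) × (Fin r → Fin b → β) → Prop) [DecidablePred P] :
    #{p | P (swapBy σ p)} = #{p | P p} :=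
  card_equiv (swapBy_involutive σ).toPerm fun p => by simp

lemma card_filter_swap_block_le (P : β → Prop) [DecidablePred P] (w w' : Fin b → β) :
    #{τ : Fin b → Bool | (∀ j, ¬ P (bif τ j then w' j else w j)) ∧
      ∃ j, P (bif τ j then w j else w' j)} ≤ 2 ^ (b - 1) := by
  set V : Finset (Fin b → Bool) := {τ | (∀ j, ¬ P (bif τ j then w' j else w j)) ∧
      ∃ j, P (bif τ j then w j else w' j)}
  obtain hV | ⟨τ₀, hτ₀⟩ := V.eq_empty_or_nonempty
  · simp [hV]
  obtain ⟨-, j₀, hj₀⟩ := (mem_filter.1 hτ₀).2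
  -- flipping the coordinate `j₀` of a member of `V` would move a point of `P` to the missing side
  calc #V ≤ #{τ : Fin b → Bool | τ j₀ = τ₀ j₀} := card_le_card fun τ hτ => by
        simp only [V, mem_filter, mem_univ, true_and] at hτ ⊢
        have := hτ.1 j₀
        cases h₀ : τ₀ j₀ <;> cases h : τ j₀ <;> simp_all
    _ = 2 ^ (b - 1) := by
        have := Fintype.card_filter_piFinset_const_eq_of_mem univ j₀ (mem_univ (τ₀ j₀))
        rwa [Fintype.piFinset_univ, card_univ, Fintype.card_bool, Fintype.card_fin] at this

lemma card_filter_forall_le_pow {γ : Type*} [Fintype γ] (P : Fin r → γ → Prop)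
    [∀ c, DecidablePred (P c)] {n : ℕ} (h : ∀ c, #{x | P c x} ≤ n) :
    #{f : Fin r → γ | ∀ c, P c (f c)} ≤ n ^ r := by
  have : ({f | ∀ c, P c (f c)} : Finset (Fin r → γ)) = Fintype.piFinset fun c => {x | P c x} := by
    ext f; simp
  rw [this, Fintype.card_piFinset]
  simpa using prod_le_pow_card univ _ n fun c _ => h c

end SwapCounting

lemma one_le_two_mul_one_sub_pow_pow {y : ℝ} {t : ℕ} (hy : 1 ≤ t * y) (hy1 : y ≤ 1) (r : ℕ) :
    1 ≤ 2 * (1 - (1 - y) ^ (2 * r * t)) ^ r := by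
  set x := (1 - y) ^ (2 * r * t)
  have hx0 : 0 ≤ x := pow_nonneg (by linarith) _
  have hx : x * (1 + 2 * r) ≤ 1 :=
    calc x * (1 + 2 * r) ≤ Real.exp (-y) ^ (2 * r * t) * Real.exp (2 * r) := by
          refine mul_le_mul (pow_le_pow_left₀ (by linarith) (Real.one_sub_le_exp_neg y) _)
            ?_ (by positivity) (by positivity)
          linarith [Real.add_one_le_exp (2 * r)]
      _ = Real.exp (2 * r * (1 - t * y)) := by
          rw [← Real.exp_nat_mul, ← Real.exp_add]; push_cast; ring_nf
      _ ≤ 1 := Real.exp_le_one_iff.2 (mul_nonpos_of_nonneg_of_nonpos (by positivity) (by linarith))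
  have := one_add_mul_le_pow (a := -x) (by nlinarith) r
  rw [← sub_eq_add_neg] at this
  nlinarith

lemma pow_le_two_mul_sub_pow_pow {N s t : ℕ} (hN : 0 < N) (hsN : s ≤ N) (hNs : N ≤ t * s)
    (r : ℕ) : (N ^ (2 * r * t)) ^ r ≤ 2 * (N ^ (2 * r * t) - (N - s) ^ (2 * r * t)) ^ r := by
  set b := 2 * r * t
  have hN' : (0 : ℝ) < N := by exact_mod_cast hN
  have hsub : ((N ^ b - (N - s) ^ b : ℕ) : ℝ) = N ^ b * (1 - (1 - s / N) ^ b) := by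
    rw [Nat.cast_sub (Nat.pow_le_pow_left (Nat.sub_le N s) b)]
    push_cast [hsN]
    rw [one_sub_div hN'.ne', div_pow]
    field_simp
  have key := one_le_two_mul_one_sub_pow_pow (y := s / N) (t := t)
    (by rw [mul_div_assoc', le_div_iff₀ hN', one_mul]; exact_mod_cast hNs)
    (div_le_one_of_le₀ (by exact_mod_cast hsN) hN'.le) r
  have : ((N ^ b) ^ r : ℝ) ≤ 2 * (N ^ b * (1 - (1 - s / N) ^ b)) ^ r := by
    rw [mul_pow, mul_left_comm]
    exact le_mul_of_one_le_right (by positivity) key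
  rw [← hsub] at this
  exact_mod_cast this

lemma two_mul_pow_lt_two_pow {D t : ℕ} (hD : 0 < D) (ht : 0 < t) :
    2 * (2 ^ (12 * D + 2) * t ^ 3 + 1) ^ D < 2 ^ (2 ^ (6 * D) * t) := by
  have hbase : 2 ^ (12 * D + 2) * t ^ 3 + 1 ≤ 2 ^ (12 * D + 3 + 3 * t) :=
    calc 2 ^ (12 * D + 2) * t ^ 3 + 1 ≤ 2 ^ (12 * D + 3) * t ^ 3 := by
          rw [show 12 * D + 3 = 12 * D + 2 + 1 by ring, pow_succ 2 (12 * D + 2)]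
          nlinarith [Nat.one_le_two_pow (n := 12 * D + 2), pow_pos ht 3]
      _ ≤ 2 ^ (12 * D + 3) * (2 ^ t) ^ 3 := by gcongr; exact Nat.lt_two_pow_self.le
      _ = 2 ^ (12 * D + 3 + 3 * t) := by ring
  have hpoly : 12 * D ^ 2 + 6 * D + 1 < 2 ^ (6 * D) :=
    calc 12 * D ^ 2 + 6 * D + 1 < (D + 1) ^ 6 := by nlinarith [pow_pos hD 3, pow_pos hD 4]
      _ ≤ (2 ^ D) ^ 6 := Nat.pow_le_pow_left Nat.lt_two_pow_self 6
      _ = 2 ^ (6 * D) := by ring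
  calc 2 * (2 ^ (12 * D + 2) * t ^ 3 + 1) ^ D ≤ 2 * (2 ^ (12 * D + 3 + 3 * t)) ^ D := by gcongr
    _ = 2 ^ (1 + (12 * D + 3 + 3 * t) * D) := by rw [← pow_mul, ← pow_succ', add_comm]
    _ < 2 ^ (2 ^ (6 * D) * t) := by
        apply Nat.pow_lt_pow_right (by norm_num)
        calc 1 + (12 * D + 3 + 3 * t) * D ≤ (12 * D ^ 2 + 6 * D + 1) * t := by nlinarith
          _ < 2 ^ (6 * D) * t := Nat.mul_lt_mul_of_pos_right hpoly ht

section HittingSet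
variable {α : Type*} [DecidableEq α] {U : Finset α} {𝒜 : Finset (Finset α)} {r b t : ℕ}

def Separates (T : Finset α) (p : (Fin r → Fin b → U) × (Fin r → Fin b → U)) : Prop :=
  (∀ c j, (p.1 c j : α) ∉ T) ∧ ∀ c, ∃ j, (p.2 c j : α) ∈ T

def IsBadPair (𝒜 : Finset (Finset α)) (p : (Fin r → Fin b → U) × (Fin r → Fin b → U)) : Prop :=
  ∃ s ∈ 𝒜, Separates s p

instance (T : Finset α) : DecidablePred (Separates (r := r) (b := b) (U := U) T) :=
  fun _ => inferInstanceAs (Decidable (_ ∧ _))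

instance : DecidablePred (IsBadPair (r := r) (b := b) (U := U) 𝒜) :=
  fun _ => inferInstanceAs (Decidable (∃ _ ∈ 𝒜, _))

lemma card_filter_separates_swapBy_le (T : Finset α)
    (p : (Fin r → Fin b → U) × (Fin r → Fin b → U)) :
    #{σ : Fin r → Fin b → Bool | Separates T (swapBy σ p)} ≤ (2 ^ (b - 1)) ^ r := by
  calc #{σ : Fin r → Fin b → Bool | Separates T (swapBy σ p)}
      = #{σ : Fin r → Fin b → Bool |
          ∀ c, (∀ j, ¬ ((bif σ c j then p.2 c j else p.1 c j : U) : α) ∈ T) ∧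
            ∃ j, ((bif σ c j then p.1 c j else p.2 c j : U) : α) ∈ T} := by
        congr 1; exact filter_congr fun σ _ => by simp [Separates, swapBy, forall_and]
    _ ≤ (2 ^ (b - 1)) ^ r := card_filter_forall_le_pow _ fun c =>
        card_filter_swap_block_le (fun x : U => (x : α) ∈ T) (p.1 c) (p.2 c)

lemma card_filter_isBadPair_swapBy_le (p : (Fin r → Fin b → U) × (Fin r → Fin b → U)) :
    #{σ : Fin r → Fin b → Bool | IsBadPair 𝒜 (swapBy σ p)} ≤
      (2 * r * b + 1) ^ 𝒜.vcDim * (2 ^ (b - 1)) ^ r := by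
  set Y : Finset α := univ.image (fun q : Fin r × Fin b => (p.1 q.1 q.2 : α)) ∪
    univ.image (fun q : Fin r × Fin b => (p.2 q.1 q.2 : α))
  have hY : #Y ≤ 2 * r * b := by
    refine (card_union_le _ _).trans ?_
    have h₁ := card_image_le (s := univ) (f := fun q : Fin r × Fin b => (p.1 q.1 q.2 : α))
    have h₂ := card_image_le (s := univ) (f := fun q : Fin r × Fin b => (p.2 q.1 q.2 : α))
    simp only [card_univ, Fintype.card_prod, Fintype.card_fin] at h₁ h₂
    linarith
  have hmemY σ c j : ((swapBy σ p).1 c j : α) ∈ Y ∧ ((swapBy σ p).2 c j : α) ∈ Y := by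
    cases h : σ c j <;> simp [swapBy, Y, h]
  have hsep σ s : Separates s (swapBy σ p) ↔ Separates (s ∩ Y) (swapBy σ p) := by
    simp [Separates, mem_inter, hmemY]
  calc #{σ : Fin r → Fin b → Bool | IsBadPair 𝒜 (swapBy σ p)}
      ≤ #((𝒜.image (· ∩ Y)).biUnion fun T => {σ | Separates T (swapBy σ p)}) := by
        refine card_le_card fun σ hσ => ?_
        obtain ⟨s, hs, hsσ⟩ := (mem_filter.1 hσ).2
        exact mem_biUnion.2 ⟨s ∩ Y, mem_image_of_mem _ hs,
          mem_filter.2 ⟨mem_univ _, (hsep σ s).1 hsσ⟩⟩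
    _ ≤ #(𝒜.image (· ∩ Y)) * (2 ^ (b - 1)) ^ r := by
        refine card_biUnion_le.trans ?_
        rw [← smul_eq_mul]
        exact sum_le_card_nsmul _ _ _ fun T _ => card_filter_separates_swapBy_le T p
    _ ≤ (2 * r * b + 1) ^ 𝒜.vcDim * (2 ^ (b - 1)) ^ r := by
        gcongr
        exact (card_image_inter_le_pow_vcDim 𝒜 Y).trans (by gcongr)

lemma card_filter_isBadPair_mul_le (hb : 0 < b) :
    #{p : (Fin r → Fin b → U) × (Fin r → Fin b → U) | IsBadPair 𝒜 p} * 2 ^ r ≤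
      Fintype.card (Fin r → Fin b → U) ^ 2 * (2 * r * b + 1) ^ 𝒜.vcDim := by
  set M := Fintype.card (Fin r → Fin b → U)
  set Q := (2 ^ (b - 1)) ^ r
  -- each swap permutes the pairs, so the sum over `σ` counts each bad pair `(2 ^ b) ^ r` times
  have hcount : #{p : (Fin r → Fin b → U) × (Fin r → Fin b → U) | IsBadPair 𝒜 p} * (2 ^ b) ^ r =
      ∑ p : (Fin r → Fin b → U) × (Fin r → Fin b → U),
        #{σ : Fin r → Fin b → Bool | IsBadPair 𝒜 (swapBy σ p)} := by
    calc _ = ∑ σ : Fin r → Fin b → Bool,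
          #{p : (Fin r → Fin b → U) × (Fin r → Fin b → U) | IsBadPair 𝒜 (swapBy σ p)} := by
          simp [card_filter_swapBy, mul_comm]
      _ = _ := by simp only [card_filter]; exact sum_comm
  have hQ : 2 ^ r * Q = (2 ^ b) ^ r := by
    rw [← mul_pow, ← pow_succ', Nat.sub_add_cancel hb]
  refine Nat.le_of_mul_le_mul_right ?_ (by positivity : 0 < Q)
  calc _ = #{p : (Fin r → Fin b → U) × (Fin r → Fin b → U) | IsBadPair 𝒜 p} * (2 ^ b) ^ r := by
        rw [← hQ, mul_assoc]
    _ ≤ (M * M) • ((2 * r * b + 1) ^ 𝒜.vcDim * Q) := by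
        rw [hcount, ← Fintype.card_prod, ← card_univ]
        exact sum_le_card_nsmul _ _ _ fun p _ => card_filter_isBadPair_swapBy_le p
    _ = _ := by rw [smul_eq_mul]; ring

lemma card_filter_hits_every_block {s : Finset α} (hs : s ⊆ U) :
    #{v : Fin r → Fin b → U | ∀ c, ∃ j, (v c j : α) ∈ s} = (#U ^ b - (#U - #s) ^ b) ^ r := by
  have hin : #{x : U | (x : α) ∈ s} = #s := by
    rw [← card_map (Function.Embedding.subtype _)]
    congr 1
    ext x
    simpa using fun hx => hs hx
  have hmiss : #{w : Fin b → U | ∀ j, (w j : α) ∉ s} = (#U - #s) ^ b := by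
    have : ({w | ∀ j, (w j : α) ∉ s} : Finset (Fin b → U)) =
        Fintype.piFinset fun _ => {x : U | (x : α) ∉ s} := by
      ext w; simp
    rw [this, Fintype.card_piFinset, prod_const, card_univ, Fintype.card_fin, filter_not,
      card_sdiff_of_subset (filter_subset _ _), hin, card_univ, Fintype.card_coe]
  have hhit : #{w : Fin b → U | ∃ j, (w j : α) ∈ s} = #U ^ b - (#U - #s) ^ b := by
    have h := card_filter_add_card_filter_not (s := univ) fun w : Fin b → U => ∃ j, (w j : α) ∈ s
    simp only [not_exists] at h
    rw [hmiss, card_univ, Fintype.card_fun, Fintype.card_coe, Fintype.card_fin] at h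
    omega
  have : ({v | ∀ c, ∃ j, (v c j : α) ∈ s} : Finset (Fin r → Fin b → U)) =
      Fintype.piFinset fun _ => {w : Fin b → U | ∃ j, (w j : α) ∈ s} := by
    ext v; simp
  rw [this, Fintype.card_piFinset, prod_const, card_univ, Fintype.card_fin, hhit]

lemma card_filter_misses_mul_le (hU : U.Nonempty) (h𝒜U : ∀ s ∈ 𝒜, s ⊆ U)
    (ht : ∀ s ∈ 𝒜, #U ≤ t * #s) :
    #{u : Fin r → Fin (2 * r * t) → U | ∃ s ∈ 𝒜, ∀ c j, (u c j : α) ∉ s} *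
        (#U ^ (2 * r * t)) ^ r ≤
      2 * #{p : (Fin r → Fin (2 * r * t) → U) × (Fin r → Fin (2 * r * t) → U) | IsBadPair 𝒜 p} := by
  set b := 2 * r * t
  set Miss : Finset (Fin r → Fin b → U) := {u | ∃ s ∈ 𝒜, ∀ c j, (u c j : α) ∉ s}
  have hfibre : ∀ u ∈ Miss, (#U ^ b) ^ r ≤ 2 * #{v : Fin r → Fin b → U | IsBadPair 𝒜 (u, v)} := by
    intro u hu
    obtain ⟨s, hs, hus⟩ := (mem_filter.1 hu).2
    calc (#U ^ b) ^ r ≤ 2 * (#U ^ b - (#U - #s) ^ b) ^ r :=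
          pow_le_two_mul_sub_pow_pow hU.card_pos (card_le_card (h𝒜U s hs)) (ht s hs) r
      _ = 2 * #{v : Fin r → Fin b → U | ∀ c, ∃ j, (v c j : α) ∈ s} := by
          rw [card_filter_hits_every_block (h𝒜U s hs)]
      _ ≤ 2 * #{v : Fin r → Fin b → U | IsBadPair 𝒜 (u, v)} := by
          gcongr with v
          exact fun hv => ⟨s, hs, hus, hv⟩
  calc #Miss * (#U ^ b) ^ r = ∑ _u ∈ Miss, (#U ^ b) ^ r := by rw [sum_const, smul_eq_mul]
    _ ≤ ∑ u, 2 * #{v : Fin r → Fin b → U | IsBadPair 𝒜 (u, v)} :=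
        (sum_le_sum hfibre).trans (sum_le_sum_of_subset (subset_univ _))
    _ = _ := by rw [← mul_sum]; simp only [card_filter, Fintype.sum_prod_type]

lemma card_filter_misses_lt (hU : U.Nonempty) (h𝒜U : ∀ s ∈ 𝒜, s ⊆ U)
    (ht : ∀ s ∈ 𝒜, #U ≤ t * #s) (ht₀ : 0 < t)
    (hr : 2 * (2 * r * (2 * r * t) + 1) ^ 𝒜.vcDim < 2 ^ r) :
    #{u : Fin r → Fin (2 * r * t) → U | ∃ s ∈ 𝒜, ∀ c j, (u c j : α) ∉ s} <
      Fintype.card (Fin r → Fin (2 * r * t) → U) := by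
  set b := 2 * r * t
  set M := Fintype.card (Fin r → Fin b → U)
  have hr₀ : 0 < r := Nat.pos_of_ne_zero fun h => by simp [h] at hr
  have hM₀ : 0 < M := Fintype.card_pos_iff.2 ⟨fun _ _ => ⟨_, hU.choose_spec⟩⟩
  have hA := card_filter_misses_mul_le (r := r) hU h𝒜U ht
  have hB := card_filter_isBadPair_mul_le (𝒜 := 𝒜) (U := U) (r := r) (by positivity : 0 < b)
  rw [show (#U ^ b) ^ r = M by simp [M]] at hA
  by_contra! h
  have := calc M * M * 2 ^ r
      ≤ #{u : Fin r → Fin b → U | ∃ s ∈ 𝒜, ∀ c j, (u c j : α) ∉ s} * M * 2 ^ r := by gcongr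
    _ ≤ 2 * (#{p : (Fin r → Fin b → U) × (Fin r → Fin b → U) | IsBadPair 𝒜 p} * 2 ^ r) := by
        rw [← mul_assoc]; gcongr
    _ ≤ 2 * (M ^ 2 * (2 * r * b + 1) ^ 𝒜.vcDim) := Nat.mul_le_mul_left 2 hB
    _ = M ^ 2 * (2 * (2 * r * b + 1) ^ 𝒜.vcDim) := by ring
    _ < M * M * 2 ^ r := by rw [sq]; gcongr
  exact this.false

theorem exists_hitting_set_of_vcDim_lt {D : ℕ} (hU : U.Nonempty) (h𝒜U : ∀ s ∈ 𝒜, s ⊆ U)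
    (ht : ∀ s ∈ 𝒜, #U ≤ t * #s) (hD : 𝒜.vcDim < D) :
    ∃ E ⊆ U, #E ≤ 2 ^ (12 * D + 1) * t ^ 3 ∧ ∀ s ∈ 𝒜, (s ∩ E).Nonempty := by
  obtain rfl | ⟨s₀, hs₀⟩ := 𝒜.eq_empty_or_nonempty
  · exact ⟨∅, empty_subset _, Nat.zero_le _, by simp⟩
  have ht₀ : 0 < t := Nat.pos_of_ne_zero fun h => by
    simpa [h, hU.card_pos.ne'] using ht s₀ hs₀
  set r := 2 ^ (6 * D) * t
  have hr : 2 * (2 * r * (2 * r * t) + 1) ^ 𝒜.vcDim < 2 ^ r := by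
    refine lt_of_le_of_lt ?_ (two_mul_pow_lt_two_pow (hD.trans_le' (Nat.zero_le _)) ht₀)
    rw [show 2 * r * (2 * r * t) + 1 = 2 ^ (12 * D + 2) * t ^ 3 + 1 by simp only [r]; ring]
    exact Nat.mul_le_mul_left 2 (Nat.pow_le_pow_right (by omega) hD.le)
  obtain ⟨u, hu⟩ : ∃ u : Fin r → Fin (2 * r * t) → U, ¬ ∃ s ∈ 𝒜, ∀ c j, (u c j : α) ∉ s := by
    by_contra! h
    exact (card_filter_misses_lt hU h𝒜U ht ht₀ hr).ne
      (by rw [filter_true_of_mem fun u _ => h u, card_univ])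
  refine ⟨univ.image fun q : Fin r × Fin (2 * r * t) => (u q.1 q.2 : α), ?_, ?_, fun s hs => ?_⟩
  · intro x hx
    obtain ⟨q, -, rfl⟩ := mem_image.1 hx
    exact (u q.1 q.2).2
  · refine card_image_le.trans ?_
    simp only [card_univ, Fintype.card_prod, Fintype.card_fin, r]
    exact le_of_eq (by ring)
  · by_contra hs'
    exact hu ⟨s, hs, fun c j hcj =>
      hs' ⟨_, mem_inter.2 ⟨hcj, mem_image_of_mem _ (mem_univ (c, j))⟩⟩⟩

end HittingSet

section NIP
variable {G : Type*} [Group G] {d : ℕ}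

lemma IsNIPSet.pos {A : Set G} (h : IsNIPSet A d) : 0 < d :=
  Nat.pos_of_ne_zero <| by rintro rfl; exact h ⟨Fin.elim0, fun _ => 1, fun _ i => i.elim0⟩

variable [DecidableEq G] {A : Finset G}

lemma IsNIPSet.vcDim_image_smul_lt (h : IsNIPSet (A : Set G) d) (X : Finset G) :
    (X.image (· • A)).vcDim < d := by
  refine (Finset.sup_lt_iff h.pos).2 fun s hs => ?_
  by_contra! hds
  obtain ⟨y, u, hu, hyu⟩ := (mem_shatterer.1 hs).exists_mem_iff_of_card_le (ι := Fin d)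
    (by simpa using hds) (fun (S : Finset (Fin d)) i => i ∈ S)
  choose x _ hxu using fun S => mem_image.1 (hu S)
  refine h ⟨y, fun S => (x S)⁻¹, fun S i => ?_⟩
  rw [← hyu, ← hxu, ← inv_smul_mem_iff, mem_coe, smul_eq_mul]

lemma IsNIPSet.vcDim_image_smul_inv_lt (h : IsNIPSet (A : Set G) d) (X : Finset G) :
    (X.image (· • A⁻¹)).vcDim < 2 ^ d := by
  refine (Finset.sup_lt_iff (Nat.two_pow_pos d)).2 fun s hs => ?_
  by_contra! hds
  obtain ⟨y, u, hu, hyu⟩ := (mem_shatterer.1 hs).exists_mem_iff_of_card_le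
    (ι := Finset (Fin d)) (by simpa using hds) (fun i (S : Finset (Fin d)) => i ∈ S)
  choose x _ hxu using fun i => mem_image.1 (hu i)
  refine h ⟨x, fun S => (y S)⁻¹, fun S i => ?_⟩
  rw [← hyu, ← hxu, ← inv_smul_mem_iff, smul_eq_mul, mem_inv', mul_inv_rev, inv_inv, mem_coe]

end NIP

section Cover
variable {G : Type*} [Group G] [DecidableEq G] {A : Finset G} {d : ℕ}

lemma card_mul_mul_le_of_small_tripling {K : ℝ} (hA : #(A ^ 3) ≤ K * #A)
    {X Y Z : Finset G} (hX : X ∈ ({A, A⁻¹} : Finset (Finset G)))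
    (hY : Y ∈ ({A, A⁻¹} : Finset (Finset G))) (hZ : Z ∈ ({A, A⁻¹} : Finset (Finset G))) :
    #(X * Y * Z) ≤ K ^ 3 * #A := by
  have hsign : ∀ X ∈ ({A, A⁻¹} : Finset (Finset G)), ∃ e : ℤ, |e| = 1 ∧ A ^ e = X := by
    simp only [mem_insert, mem_singleton, forall_eq_or_imp, forall_eq]
    exact ⟨⟨1, by simp, by simp⟩, ⟨-1, by simp, by simp⟩⟩
  obtain ⟨e₀, he₀, rfl⟩ := hsign X hX
  obtain ⟨e₁, he₁, rfl⟩ := hsign Y hY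
  obtain ⟨e₂, he₂, rfl⟩ := hsign Z hZ
  simpa [List.finRange_succ, mul_assoc] using small_alternating_pow_of_small_tripling le_rfl hA
    ![e₀, e₁, e₂] fun i => by fin_cases i <;> assumption

lemma card_union_inv_pow_three_le {K : ℝ} (hA : #(A ^ 3) ≤ K * #A) :
    #((A ∪ A⁻¹) ^ 3) ≤ 8 * K ^ 3 * #A := by
  set 𝒳 : Finset (Finset G) := {A, A⁻¹}
  have hcover : (A ∪ A⁻¹) ^ 3 ⊆ (𝒳 ×ˢ 𝒳 ×ˢ 𝒳).biUnion fun X => X.1 * X.2.1 * X.2.2 := by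
    have hpick : ∀ a ∈ A ∪ A⁻¹, ∃ X ∈ 𝒳, a ∈ X := by simp [𝒳]
    intro x hx
    obtain ⟨y, hy, c, hc, rfl⟩ := mem_mul.1 (pow_three' (A ∪ A⁻¹) ▸ hx)
    obtain ⟨a, ha, b, hb, rfl⟩ := mem_mul.1 hy
    obtain ⟨X, hX, haX⟩ := hpick a ha
    obtain ⟨Y, hY, hbY⟩ := hpick b hb
    obtain ⟨Z, hZ, hcZ⟩ := hpick c hc
    exact mem_biUnion.2 ⟨(X, Y, Z), mem_product.2 ⟨hX, mem_product.2 ⟨hY, hZ⟩⟩,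
      mul_mem_mul (mul_mem_mul haX hbY) hcZ⟩
  have h𝒳 : #(𝒳 ×ˢ 𝒳 ×ˢ 𝒳) ≤ 8 := by
    simp only [card_product]
    have : #𝒳 ≤ 2 := card_le_two
    calc #𝒳 * (#𝒳 * #𝒳) ≤ 2 * (2 * 2) := by gcongr
      _ = 8 := rfl
  obtain rfl | hA₀ := A.eq_empty_or_nonempty
  · simp
  have hK : 0 ≤ K := nonneg_of_mul_nonneg_left (hA.trans' (by positivity)) (by positivity)
  calc (#((A ∪ A⁻¹) ^ 3) : ℝ) ≤ ∑ X ∈ 𝒳 ×ˢ 𝒳 ×ˢ 𝒳, (#(X.1 * X.2.1 * X.2.2) : ℝ) := by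
        exact_mod_cast (card_le_card hcover).trans card_biUnion_le
    _ ≤ #(𝒳 ×ˢ 𝒳 ×ˢ 𝒳) • (K ^ 3 * #A) := sum_le_card_nsmul _ _ _ fun X hX => by
        simp only [mem_product] at hX
        exact card_mul_mul_le_of_small_tripling hA hX.1 hX.2.1 hX.2.2
    _ ≤ 8 * K ^ 3 * #A := by
        rw [nsmul_eq_mul, mul_assoc]
        gcongr
        exact_mod_cast h𝒳

lemma exists_subset_mul_of_vcDim_lt {X U : Finset G} {t D : ℕ} (hA : A.Nonempty)
    (hXU : X * A⁻¹ ⊆ U) (hU : #U ≤ t * #A) (hD : (X.image (· • A⁻¹)).vcDim < D) :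
    ∃ E ⊆ U, #E ≤ 2 ^ (12 * D + 1) * t ^ 3 ∧ X ⊆ E * A := by
  obtain rfl | hX := X.eq_empty_or_nonempty
  · exact ⟨∅, empty_subset _, Nat.zero_le _, empty_subset _⟩
  obtain ⟨E, hEU, hE, hhit⟩ := exists_hitting_set_of_vcDim_lt ((hX.mul hA.inv).mono hXU)
    (by simpa using fun x hx => (smul_finset_subset_mul hx).trans hXU)
    (by simpa [card_smul_finset] using fun _ _ => hU) hD
  refine ⟨E, hEU, hE, fun x hx => ?_⟩
  obtain ⟨e, he⟩ := hhit _ (mem_image_of_mem _ hx)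
  obtain ⟨a, ha, hae⟩ := mem_smul_finset.1 (mem_inter.1 he).1
  exact mem_mul.2 ⟨e, (mem_inter.1 he).2, a⁻¹, mem_inv'.1 ha, by
    rw [← hae, smul_eq_mul, mul_assoc, mul_inv_cancel, mul_one]⟩

lemma subset_pow_three_of_inv_eq {B : Finset G} (hB : B⁻¹ = B) : B ⊆ B ^ 3 := fun b hb => by
  rw [pow_three']
  convert mul_mem_mul (mul_mem_mul hb (hB ▸ inv_mem_inv hb)) hb using 1
  group

lemma inv_pow_two_union_one {B : Finset G} (hB : B⁻¹ = B) :
    (B ^ 2 ∪ {1})⁻¹ = B ^ 2 ∪ {1} := by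
  apply coe_injective; push_cast; rw [Set.union_inv, ← inv_pow, ← coe_inv, hB]; simp

lemma pow_two_union_one_mul_subset {B : Finset G} (hB : B⁻¹ = B) :
    (B ^ 2 ∪ {1}) * B ⊆ B ^ 3 := by
  rw [union_mul, ← pow_succ, singleton_one, one_mul]
  exact union_subset subset_rfl (subset_pow_three_of_inv_eq hB)

lemma ceil_pow_three_le {k : ℝ} (hk : 1 ≤ k) : (⌈8 * k ^ 3⌉₊ : ℝ) ^ 3 ≤ 2 ^ 10 * k ^ 9 := by
  have ht : (⌈8 * k ^ 3⌉₊ : ℝ) ≤ 9 * k ^ 3 := by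
    linarith [Nat.ceil_lt_add_one (by positivity : (0 : ℝ) ≤ 8 * k ^ 3), one_le_pow₀ (n := 3) hk]
  calc (⌈8 * k ^ 3⌉₊ : ℝ) ^ 3 ≤ (9 * k ^ 3) ^ 3 := by gcongr
    _ ≤ 2 ^ 10 * k ^ 9 := by nlinarith [pow_nonneg (by linarith : (0 : ℝ) ≤ k) 9]

theorem IsNIPSet.exists_covers (hnip : IsNIPSet (A : Set G) d) (hA : A.Nonempty) {k : ℝ}
    (h3 : #(A ^ 3) ≤ k * #A) :
    ∃ E F : Finset G, E ⊆ (A ∪ A⁻¹) ^ 3 ∧ F ⊆ (A ∪ A⁻¹) ^ 3 ∧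
      (#E : ℝ) ≤ 2 ^ (12 * 2 ^ d + 11) * k ^ 9 ∧ (#F : ℝ) ≤ 2 ^ (12 * 2 ^ d + 11) * k ^ 9 ∧
      (A ∪ A⁻¹) ^ 2 ∪ {1} ⊆ E * A ∧ (A ∪ A⁻¹) ^ 2 ∪ {1} ⊆ A * F := by
  set B := A ∪ A⁻¹
  set X := B ^ 2 ∪ {1}
  have hB : B⁻¹ = B := by ext x; simp [B, or_comm]
  have hXU : ∀ A' ⊆ B, X * A' ⊆ B ^ 3 := fun A' hA' =>
    (mul_subset_mul_left hA').trans (pow_two_union_one_mul_subset hB)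
  have hk : 1 ≤ k := one_le_of_le_mul_right₀ (by simpa using hA)
    (h3.trans' (by exact_mod_cast card_le_card_pow three_ne_zero))
  set t := ⌈8 * k ^ 3⌉₊
  have hBt : #(B ^ 3) ≤ t * #A := by
    have : (#(B ^ 3) : ℝ) ≤ t * #A :=
      (card_union_inv_pow_three_le h3).trans (by gcongr; exact Nat.le_ceil _)
    exact_mod_cast this
  have hbound : ∀ n ≤ 2 ^ (12 * 2 ^ d + 1) * t ^ 3, (n : ℝ) ≤ 2 ^ (12 * 2 ^ d + 11) * k ^ 9 :=
    fun n hn => calc (n : ℝ) ≤ 2 ^ (12 * 2 ^ d + 1) * (t : ℝ) ^ 3 := by exact_mod_cast hn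
      _ ≤ 2 ^ (12 * 2 ^ d + 1) * (2 ^ 10 * k ^ 9) := by gcongr; exact ceil_pow_three_le hk
      _ = 2 ^ (12 * 2 ^ d + 11) * k ^ 9 := by ring
  obtain ⟨E, hEU, hE, hXE⟩ := exists_subset_mul_of_vcDim_lt hA (hXU _ subset_union_right) hBt
    (hnip.vcDim_image_smul_inv_lt X)
  obtain ⟨F, hFU, hF, hXF⟩ := exists_subset_mul_of_vcDim_lt (A := A⁻¹) (U := B ^ 3) hA.inv
    (by rw [inv_inv]; exact hXU _ subset_union_left) (by rwa [card_inv])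
    (by rw [inv_inv]; exact (hnip.vcDim_image_smul_lt X).trans Nat.lt_two_pow_self)
  refine ⟨E, F⁻¹, hEU, ?_, hbound _ hE, by rw [card_inv]; exact hbound _ hF, hXE, ?_⟩
  · calc F⁻¹ ⊆ (B ^ 3)⁻¹ := inv_subset_inv hFU
      _ = B ^ 3 := by rw [← inv_pow, hB]
  · calc X = X⁻¹ := (inv_pow_two_union_one hB).symm
      _ ⊆ (F * A⁻¹)⁻¹ := inv_subset_inv hXF
      _ = A * F⁻¹ := by rw [mul_inv_rev, inv_inv]

end Cover

section PmPow
variable {G : Type*} [Group G]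

lemma inv_pmPow (A : Set G) (n : ℕ) : (pmPow A n)⁻¹ = pmPow A n := by
  rw [pmPow, Set.union_inv, ← inv_pow, Set.union_inv, inv_inv, Set.union_comm A⁻¹,
    Set.inv_singleton, inv_one]

lemma coe_pmPow [DecidableEq G] (A : Finset G) (n : ℕ) :
    pmPow (A : Set G) n = ↑((A ∪ A⁻¹) ^ n ∪ {1}) := by
  simp [pmPow]

lemma pmPow_one_mul_subset {A E : Set G} (h : pmPow A 2 ⊆ E * A) :
    pmPow A 1 * pmPow A 1 ⊆ (E ∪ {1}) * pmPow A 1 := by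
  have hA : A ⊆ pmPow A 1 := fun a ha => Or.inl (by rw [pow_one]; exact Or.inl ha)
  rintro _ ⟨p, hp | rfl, q, hq, rfl⟩
  · rcases hq with hq | rfl
    · rw [pow_one] at hp hq
      have hpq : p * q ∈ pmPow A 2 := Or.inl (by rw [sq]; exact Set.mul_mem_mul hp hq)
      exact Set.mul_subset_mul Set.subset_union_left hA (h hpq)
    · exact ⟨1, Or.inr rfl, p, Or.inl hp, by simp⟩
  · exact ⟨1, Or.inr rfl, q, hq, rfl⟩

end PmPow

/-- **NIP sets of small tripling are essentially approximate groups.**  For every `d ≥ 1`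
there are constants `C(d), c(d) > 0` such that if `A` is a nonempty finite `d`-NIP subset
of a group `G` with `|A³| ≤ k|A|` (`k ≥ 1` real), then there are `E, F ⊆ A^{±3}` of size at
most `C(d)·k^{c(d)}` with `A^{±2} ⊆ EA ∩ AF`; in particular `(A^{±1})²` is covered by at
most `C(d)·k^{c(d)}` left translates of `A^{±1}`, so `A^{±1}` is an `m`-approximate group
for some `m ≤ C(d)·k^{c(d)}`. -/
theorem nip_small_tripling_approx_group :
    ∀ d : ℕ, 1 ≤ d → ∃ C c : ℝ, 0 < C ∧ 0 < c ∧
      ∀ (G : Type) (_ : Group G) (A : Set G) (k : ℝ), 1 ≤ k → A.Nonempty → A.Finite →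
        IsNIPSet A d → ((A * A * A).ncard : ℝ) ≤ k * A.ncard →
        (∃ E F : Finset G, (E : Set G) ⊆ pmPow A 3 ∧ (F : Set G) ⊆ pmPow A 3 ∧
          (E.card : ℝ) ≤ C * k ^ c ∧ (F.card : ℝ) ≤ C * k ^ c ∧
          pmPow A 2 ⊆ ((E : Set G) * A) ∩ (A * (F : Set G))) ∧
        (∃ T : Finset G, (T.card : ℝ) ≤ C * k ^ c ∧
          pmPow A 1 * pmPow A 1 ⊆ (T : Set G) * pmPow A 1) ∧
        ∃ m : ℕ, (m : ℝ) ≤ C * k ^ c ∧ IsApproximateGroup (pmPow A 1) m := by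
  intro d _
  set C : ℝ := 2 ^ (12 * 2 ^ d + 11)
  refine ⟨2 * C, 9, by positivity, by norm_num, fun G _ A k hk hne hfin hnip htrip => ?_⟩
  classical
  obtain ⟨A, rfl⟩ := hfin.exists_finset_coe
  have h3 : (#(A ^ 3) : ℝ) ≤ k * #A := by
    simpa [pow_three', ← coe_mul, Set.ncard_coe_finset] using htrip
  obtain ⟨E, F, hE, hF, hEc, hFc, hXE, hXF⟩ := hnip.exists_covers (coe_nonempty.1 hne) h3
  have hk9 : k ^ (9 : ℝ) = k ^ 9 := by exact_mod_cast Real.rpow_natCast k 9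
  have hCk : 1 ≤ C * k ^ 9 :=
    one_le_mul_of_one_le_of_one_le (one_le_pow₀ (by norm_num)) (one_le_pow₀ hk)
  have hE3 : (E : Set G) ⊆ pmPow A 3 := by rw [coe_pmPow]; exact_mod_cast hE.trans subset_union_left
  have hF3 : (F : Set G) ⊆ pmPow A 3 := by rw [coe_pmPow]; exact_mod_cast hF.trans subset_union_left
  have hEA : pmPow (A : Set G) 2 ⊆ E * A := by rw [coe_pmPow]; exact_mod_cast hXE
  have hAF : pmPow (A : Set G) 2 ⊆ A * F := by rw [coe_pmPow]; exact_mod_cast hXF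
  have hT : pmPow (A : Set G) 1 * pmPow A 1 ⊆ ((E ∪ {1} : Finset G) : Set G) * pmPow A 1 := by
    push_cast; exact pmPow_one_mul_subset hEA
  have hTc : (#(E ∪ {1}) : ℝ) ≤ 2 * C * k ^ (9 : ℝ) := by
    have : (#(E ∪ {1}) : ℝ) ≤ #E + 1 := by exact_mod_cast card_union_le E {1}
    rw [hk9]; linarith
  refine ⟨⟨E, F, hE3, hF3, by rw [hk9]; linarith, by rw [hk9]; linarith,
      Set.subset_inter hEA hAF⟩, ⟨E ∪ {1}, hTc, hT⟩,
    #(E ∪ {1}), hTc, Or.inr rfl, inv_pmPow _ _, E ∪ {1}, le_rfl, hT⟩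
end

section
/- Let G and G' be abelian groups, let A ⊆ G be a finite set with 0 ∈ A that is d-NIP in G, and let φ: A → A' ⊆ G' be a Freiman s-isomorphism with s ≥ 4 and φ(0) = 0. If G' is generated by A', then A' is d-NIP in G'. -/
/-! If `A - A = G`, the rule `a - b ↦ φ a - φ b` is well defined and injective because `φ` is a
Freiman 2-isomorphism, additive because it is a 3-isomorphism, and onto because `A'` generates
`G'`; so `A'` is the image of `A` under a group isomorphism. Otherwise, given a shattering of `A'`,
translate it so that its points lie in `A'`: every translate indexed by a nonempty set is then a
difference of two elements of `A'`, and the condition `a - b + c ∈ A` is transported by the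
2-isomorphism, while for the empty set any element outside `A - A` serves as translate. -/

open Pointwise

/-- A subset `A` of an additive group `G` is `d`-NIP if there are no `x₁,…,x_d ∈ G` and
`(g_S)_{S ⊆ [d]}` in `G` with `g_S + xᵢ ∈ A ↔ i ∈ S`. -/
def IsNIPAddSet {G : Type*} [AddGroup G] (A : Set G) (d : ℕ) : Prop :=
  ¬ ∃ (x : Fin d → G) (g : Finset (Fin d) → G),
      ∀ (S : Finset (Fin d)) (i : Fin d), g S + x i ∈ A ↔ i ∈ S

/-- `φ` restricts to a Freiman `s`-isomorphism from `A` onto `A'`. -/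
def IsFreimanIsoOn {G G' : Type*} [AddCommGroup G] [AddCommGroup G']
    (φ : G → G') (A : Set G) (A' : Set G') (s : ℕ) : Prop :=
  Set.BijOn φ A A' ∧
    ∀ a b : Fin s → G, (∀ i, a i ∈ A) → (∀ i, b i ∈ A) →
      ((∑ i, a i = ∑ i, b i) ↔ (∑ i, φ (a i) = ∑ i, φ (b i)))


namespace IsFreimanIsoOn

variable {G G' : Type*} [AddCommGroup G] [AddCommGroup G']
  {A : Set G} {A' : Set G'} {φ : G → G'} {s t : ℕ}

/-- Sums of `t` terms are padded with zeros to sums of `s` terms. -/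
theorem mono (hφ : IsFreimanIsoOn φ A A' s) (h0 : (0 : G) ∈ A) (hφ0 : φ 0 = 0)
    (hts : t ≤ s) : IsFreimanIsoOn φ A A' t := by
  obtain ⟨k, rfl⟩ := Nat.exists_eq_add_of_le hts
  refine ⟨hφ.1, fun a b ha hb => ?_⟩
  have hpad : ∀ c : Fin t → G, (∀ i, c i ∈ A) → ∀ i, Fin.append c (fun _ : Fin k => 0) i ∈ A :=
    fun c hc i => Fin.addCases (fun i => by simpa using hc i) (fun _ => by simpa using h0) i
  simpa [Fin.sum_univ_add, hφ0] using hφ.2 _ _ (hpad a ha) (hpad b hb)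

theorem add_eq_add_iff (hφ : IsFreimanIsoOn φ A A' 2) {a b c e : G}
    (ha : a ∈ A) (hb : b ∈ A) (hc : c ∈ A) (he : e ∈ A) :
    a + b = c + e ↔ φ a + φ b = φ c + φ e := by
  simpa using hφ.2 ![a, b] ![c, e] (Fin.forall_fin_two.2 ⟨ha, hb⟩)
    (Fin.forall_fin_two.2 ⟨hc, he⟩)

theorem sub_eq_sub_iff (hφ : IsFreimanIsoOn φ A A' 2) {a b c e : G}
    (ha : a ∈ A) (hb : b ∈ A) (hc : c ∈ A) (he : e ∈ A) :
    a - b = c - e ↔ φ a - φ b = φ c - φ e := by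
  rw [sub_eq_sub_iff_add_eq_add, sub_eq_sub_iff_add_eq_add, hφ.add_eq_add_iff ha he hc hb]

theorem add_add_eq_add_add_iff (hφ : IsFreimanIsoOn φ A A' 3) {a b c a' b' c' : G}
    (ha : a ∈ A) (hb : b ∈ A) (hc : c ∈ A) (ha' : a' ∈ A) (hb' : b' ∈ A) (hc' : c' ∈ A) :
    a + b + c = a' + b' + c' ↔ φ a + φ b + φ c = φ a' + φ b' + φ c' := by
  simpa [Fin.sum_univ_three] using hφ.2 ![a, b, c] ![a', b', c']
    (Fin.forall_fin_succ.2 ⟨ha, Fin.forall_fin_two.2 ⟨hb, hc⟩⟩)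
    (Fin.forall_fin_succ.2 ⟨ha', Fin.forall_fin_two.2 ⟨hb', hc'⟩⟩)

theorem sub_add_mem_iff (hφ : IsFreimanIsoOn φ A A' 2) {a b c : G}
    (ha : a ∈ A) (hb : b ∈ A) (hc : c ∈ A) :
    a - b + c ∈ A ↔ φ a - φ b + φ c ∈ A' := by
  constructor
  · intro hmem
    have h := (hφ.add_eq_add_iff hmem hb ha hc).1 (by abel)
    rw [show φ a - φ b + φ c = φ (a - b + c) by rw [eq_sub_of_add_eq h]; abel]
    exact hφ.1.mapsTo hmem
  · intro hmem
    obtain ⟨e, he, hφe⟩ := hφ.1.surjOn hmem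
    have h := (hφ.add_eq_add_iff he hb ha hc).2 (by rw [hφe]; abel)
    rwa [show a - b + c = e by rw [← sub_eq_of_eq_add' h.symm]; abel]

theorem exists_addMonoidHom_extension (hφ : IsFreimanIsoOn φ A A' 3) (h0 : (0 : G) ∈ A)
    (hφ0 : φ 0 = 0) (hcov : A - A = Set.univ) :
    ∃ f : G →+ G', Function.Injective f ∧ Set.EqOn f φ A := by
  have hφ2 := hφ.mono h0 hφ0 (by norm_num : 2 ≤ 3)
  have hsub : ∀ z, ∃ a ∈ A, ∃ b ∈ A, a - b = z := fun z => Set.mem_sub.1 (hcov ▸ trivial)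
  choose α hα β hβ hαβ using hsub
  let f : G →+ G' := AddMonoidHom.mk' (fun z => φ (α z) - φ (β z)) fun y z => by
    have hG : α (y + z) + β y + β z = β (y + z) + α y + α z := by
      have e : α (y + z) - β (y + z) = (α y - β y) + (α z - β z) := by rw [hαβ, hαβ, hαβ]
      rw [← sub_eq_zero]
      convert sub_eq_zero.2 e using 1
      abel
    have h := (hφ.add_add_eq_add_add_iff (hα (y + z)) (hβ y) (hβ z) (hβ (y + z)) (hα y)
      (hα z)).1 hG
    rw [← sub_eq_zero]
    convert sub_eq_zero.2 h using 1
    abel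
  refine ⟨f, fun y z h => ?_, fun a ha => ?_⟩
  · rw [← hαβ y, ← hαβ z]
    exact (hφ2.sub_eq_sub_iff (hα y) (hβ y) (hα z) (hβ z)).2 h
  · simpa [f, hφ0] using
      (hφ2.sub_eq_sub_iff (hα a) (hβ a) ha h0).1 ((hαβ a).trans (sub_zero a).symm)

theorem isNIPAddSet_of_notMem_sub (hφ : IsFreimanIsoOn φ A A' 2) {c : G} (hc : c ∉ A - A)
    {d : ℕ} (hNIP : IsNIPAddSet A d) : IsNIPAddSet A' d := by
  classical
  rintro ⟨x, g, hxg⟩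
  set ψ := Function.invFunOn φ A
  have hψA : ∀ w ∈ A', ψ w ∈ A := fun w hw => hφ.1.surjOn.mapsTo_invFunOn hw
  have hφψ : ∀ w ∈ A', φ (ψ w) = w := fun w hw => hφ.1.surjOn.rightInvOn_invFunOn hw
  have hmem : ∀ S i, i ∈ S → g S + x i ∈ A' := fun S i hi => (hxg S i).2 hi
  set y : Fin d → G := fun i => ψ (g Finset.univ + x i)
  have hyA : ∀ i, y i ∈ A := fun i => hψA _ (hmem _ i (Finset.mem_univ i))
  have hφy : ∀ i, φ (y i) = g Finset.univ + x i :=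
    fun i => hφψ _ (hmem _ i (Finset.mem_univ i))
  refine hNIP ⟨y, fun S => if hS : S.Nonempty then ψ (g S + x hS.choose) - y hS.choose
    else c, fun S i => ?_⟩
  dsimp only
  by_cases hS : S.Nonempty
  · have hj := hmem S _ hS.choose_spec
    rw [dif_pos hS, hφ.sub_add_mem_iff (hψA _ hj) (hyA _) (hyA i), hφψ _ hj, hφy, hφy, ← hxg S i]
    exact iff_of_eq (congrArg (· ∈ A') (by abel))
  · rw [dif_neg hS, Finset.not_nonempty_iff_eq_empty.1 hS]
    simp only [Finset.notMem_empty, iff_false]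
    exact fun h => hc (Set.mem_sub.2 ⟨_, h, _, hyA i, add_sub_cancel_right c (y i)⟩)

end IsFreimanIsoOn

theorem IsNIPAddSet.of_preimage {G G' : Type*} [AddGroup G] [AddGroup G'] (f : G →+ G')
    (hf : Function.Surjective f) {B : Set G'} {d : ℕ} (h : IsNIPAddSet (f ⁻¹' B) d) :
    IsNIPAddSet B d := by
  rintro ⟨x, g, hxg⟩
  choose f' hf' using hf
  exact h ⟨f' ∘ x, f' ∘ g, fun S i => by simpa [hf'] using hxg S i⟩

theorem freiman_iso_preserves_nip_general {G G' : Type*} [AddCommGroup G] [AddCommGroup G']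
    (A : Set G) (A' : Set G') (φ : G → G') (d s : ℕ) (hs : 4 ≤ s)
    (h0 : (0 : G) ∈ A) (hφ0 : φ 0 = 0)
    (hφ : IsFreimanIsoOn φ A A' s)
    (hgen : AddSubgroup.closure A' = ⊤)
    (hNIP : IsNIPAddSet A d) :
    IsNIPAddSet A' d := by
  by_cases hcov : A - A = Set.univ
  · obtain ⟨f, hinj, hfφ⟩ :=
      (hφ.mono h0 hφ0 (by omega : 3 ≤ s)).exists_addMonoidHom_extension h0 hφ0 hcov
    have himage : f '' A = A' := hfφ.image_eq.trans hφ.1.image_eq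
    have hsurj : Function.Surjective f := by
      rw [← AddMonoidHom.range_eq_top, eq_top_iff, ← hgen, AddSubgroup.closure_le, ← himage]
      exact Set.image_subset_range _ _
    refine IsNIPAddSet.of_preimage f hsurj ?_
    rwa [← himage, Set.preimage_image_eq A hinj]
  · obtain ⟨c, hc⟩ := (Set.ne_univ_iff_exists_notMem _).1 hcov
    exact (hφ.mono h0 hφ0 (by omega : 2 ≤ s)).isNIPAddSet_of_notMem_sub hc hNIP

/-- **Freiman isomorphisms preserve NIP.**  Let `G, G'` be abelian groups, `A ⊆ G` finite
with `0 ∈ A` and `d`-NIP in `G`, and let `φ` be a Freiman `s`-isomorphism from `A` onto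
`A' ⊆ G'` with `s ≥ 4` and `φ(0) = 0`.  If `G'` is generated by `A'`, then `A'` is `d`-NIP
in `G'`. -/
theorem freiman_iso_preserves_nip {G G' : Type*} [AddCommGroup G] [AddCommGroup G']
    (A : Set G) (A' : Set G') (φ : G → G') (d s : ℕ) (hd : 1 ≤ d) (hs : 4 ≤ s)
    (hA : A.Finite) (h0 : (0 : G) ∈ A) (hφ0 : φ 0 = 0)
    (hφ : IsFreimanIsoOn φ A A' s)
    (hgen : AddSubgroup.closure A' = ⊤)
    (hNIP : IsNIPAddSet A d) :
    IsNIPAddSet A' d :=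
  freiman_iso_preserves_nip_general A A' φ d s hs h0 hφ0 hφ hgen hNIP
end

section
/- For every real ε > 0 and every integer q ≥ 1 there exist a real δ > 0 and an integer p ≥ 1 such that the following holds. Let B be a Boolean algebra and let ν be a finitely additive probability measure on B. If x_1, …, x_p ∈ B satisfy ν(x_i) ≥ ε for all i ∈ {1,…,p}, then there is a set I ⊆ {1,…,p} with |I| = q such that ν(⨅_{i ∈ I} x_i) ≥ δ. -/
/-!
Let `S_m` be the event that at least `m` of the `xᵢ` occur. Finite additivity gives the
layer-cake identity `∑ᵢ ν(xᵢ) = ∑_{m=1}^{p} ν(S_m)`. Bounding `ν(S_m) ≤ 1` for `m < q` and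
`ν(S_m) ≤ ν(S_q)` for `m ≥ q` yields `εp ≤ (q - 1) + p ν(S_q)`, hence `ν(S_q) ≥ 1/p` once
`εp ≥ q`. As `S_q` is the join of the `C(p, q)` meets `⨅_{i ∈ I} xᵢ` with `|I| = q`,
subadditivity gives one of them measure at least `1 / (p C(p, q))`.
-/

open Finset

theorem sum_range_le_of_antitone {f : ℕ → ℝ} (hf : Antitone f) (hf0 : ∀ m, 0 ≤ f m)
    (hf1 : ∀ m, f m ≤ 1) (n q : ℕ) :
    ∑ m ∈ range n, f (m + 1) ≤ q + n * f (q + 1) := by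
  have hterm : ∀ m, f (m + 1) ≤ (if m < q then 1 else 0) + f (q + 1) := by
    intro m
    split_ifs with hm
    · linarith [hf1 (m + 1), hf0 (q + 1)]
    · simpa using hf (by omega : q + 1 ≤ m + 1)
  have hcount : #{m ∈ range n | m < q} ≤ q :=
    (card_le_card fun m hm => by simp_all).trans (card_range q).le
  calc ∑ m ∈ range n, f (m + 1)
      ≤ ∑ m ∈ range n, ((if m < q then 1 else 0) + f (q + 1)) := sum_le_sum fun m _ => hterm m
    _ = #{m ∈ range n | m < q} + n * f (q + 1) := by
      rw [sum_add_distrib, sum_boole, sum_const, card_range, nsmul_eq_mul]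
    _ ≤ q + n * f (q + 1) := by gcongr

variable {B ι : Type*} [BooleanAlgebra B]

def IsFinitelyAdditive (ν : B → ℝ) : Prop :=
  ∀ x y : B, x ⊓ y = ⊥ → ν (x ⊔ y) = ν x + ν y

namespace IsFinitelyAdditive

variable {ν : B → ℝ}

theorem map_bot (hν : IsFinitelyAdditive ν) : ν ⊥ = 0 := by
  have := hν ⊥ ⊥ (inf_bot_eq ⊥)
  rw [sup_bot_eq] at this
  linarith

theorem map_sup_add_map_inf (hν : IsFinitelyAdditive ν) (a b : B) :
    ν (a ⊔ b) + ν (a ⊓ b) = ν a + ν b := by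
  have ha : ν (a ⊔ b \ a) = ν a + ν (b \ a) := hν a (b \ a) inf_sdiff_self_right
  have hb : ν (b ⊓ a ⊔ b \ a) = ν (b ⊓ a) + ν (b \ a) := hν _ _ (inf_inf_sdiff b a)
  rw [sup_sdiff_self_right] at ha
  rw [sup_inf_sdiff, inf_comm] at hb
  linarith

theorem monotone (hν : IsFinitelyAdditive ν) (h0 : ∀ x, 0 ≤ ν x) : Monotone ν := by
  intro a b hab
  have h := hν a (b \ a) inf_sdiff_self_right
  rw [sup_sdiff_cancel_right hab] at h
  linarith [h0 (b \ a)]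

theorem map_finset_sup_le (hν : IsFinitelyAdditive ν) (h0 : ∀ x, 0 ≤ ν x) (s : Finset ι)
    (f : ι → B) : ν (s.sup f) ≤ ∑ i ∈ s, ν (f i) := by
  induction s using Finset.cons_induction with
  | empty => simp [hν.map_bot]
  | cons a s _ ih =>
    rw [sup_cons, sum_cons]
    linarith [hν.map_sup_add_map_inf (f a) (s.sup f), h0 (f a ⊓ s.sup f)]

end IsFinitelyAdditive

def atLeast (s : Finset ι) (x : ι → B) (m : ℕ) : B :=
  (s.powersetCard m).sup (·.inf x)

section atLeast

variable (s : Finset ι) (x : ι → B)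

@[simp]
theorem atLeast_zero : atLeast s x 0 = ⊤ := by
  simp [atLeast]

theorem atLeast_eq_bot_of_card_lt {m : ℕ} (h : #s < m) : atLeast s x m = ⊥ := by
  simp [atLeast, powersetCard_eq_empty.mpr h]

theorem atLeast_antitone : Antitone (atLeast s x) := by
  intro k m hkm
  refine Finset.sup_le fun I hI => ?_
  rw [mem_powersetCard] at hI
  obtain ⟨J, hJI, hJ⟩ := exists_subset_card_eq (hI.2 ▸ hkm)
  exact (inf_mono hJI).trans
    (le_sup (f := (·.inf x)) (mem_powersetCard.mpr ⟨hJI.trans hI.1, hJ⟩))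

theorem atLeast_insert_succ [DecidableEq ι] {a : ι} (ha : a ∉ s) (m : ℕ) :
    atLeast (insert a s) x (m + 1) = atLeast s x (m + 1) ⊔ (x a ⊓ atLeast s x m) := by
  rw [atLeast, powersetCard_succ_insert ha, sup_union, sup_image, atLeast, atLeast,
    sup_inf_distrib_left]
  congr 1
  refine sup_congr rfl fun I hI => ?_
  have haI : a ∉ I := fun h => ha (mem_powersetCard.mp hI |>.1 h)
  simp [inf_insert]

end atLeast

namespace IsFinitelyAdditive

variable {ν : B → ℝ}

theorem map_atLeast_insert_succ (hν : IsFinitelyAdditive ν) [DecidableEq ι] {s : Finset ι}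
    (x : ι → B) {a : ι} (ha : a ∉ s) (m : ℕ) :
    ν (atLeast (insert a s) x (m + 1)) =
      ν (atLeast s x (m + 1)) + (ν (x a ⊓ atLeast s x m) - ν (x a ⊓ atLeast s x (m + 1))) := by
  have hinf : atLeast s x (m + 1) ⊓ (x a ⊓ atLeast s x m) = x a ⊓ atLeast s x (m + 1) := by
    rw [inf_left_comm, inf_eq_left.mpr (atLeast_antitone s x m.le_succ)]
  have h := hν.map_sup_add_map_inf (atLeast s x (m + 1)) (x a ⊓ atLeast s x m)
  rw [hinf] at h
  rw [atLeast_insert_succ s x ha]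
  linarith

theorem sum_eq_sum_atLeast (hν : IsFinitelyAdditive ν) (s : Finset ι) (x : ι → B) :
    ∑ i ∈ s, ν (x i) = ∑ m ∈ range #s, ν (atLeast s x (m + 1)) := by
  classical
  induction s using Finset.induction_on with
  | empty => simp
  | insert a s ha ih =>
    simp only [hν.map_atLeast_insert_succ x ha, sum_add_distrib,
      sum_range_sub' (fun m => ν (x a ⊓ atLeast s x m)), card_insert_of_notMem ha,
      sum_range_succ (fun m => ν (atLeast s x (m + 1))), sum_insert ha, ← ih,
      atLeast_eq_bot_of_card_lt s x (Nat.lt_succ_self _), atLeast_zero, inf_top_eq, inf_bot_eq,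
      hν.map_bot]
    ring

theorem exists_card_eq_map_atLeast_div_le (hν : IsFinitelyAdditive ν) (h0 : ∀ x, 0 ≤ ν x)
    {s : Finset ι} {x : ι → B} {q : ℕ} (hpos : 0 < ν (atLeast s x q)) :
    ∃ I ⊆ s, #I = q ∧ ν (atLeast s x q) / (#s).choose q ≤ ν (I.inf x) := by
  have hne : (s.powersetCard q).Nonempty := by
    rw [nonempty_iff_ne_empty]
    intro h
    simp [atLeast, h, hν.map_bot] at hpos
  have hchoose : ((#s).choose q : ℝ) ≠ 0 := by
    rw [← card_powersetCard]; exact_mod_cast hne.card_pos.ne'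
  obtain ⟨I, hI, hle⟩ := exists_le_of_sum_le hne (f := fun _ => ν (atLeast s x q) / (#s).choose q)
    (g := fun I => ν (I.inf x)) (by
      rw [sum_const, card_powersetCard, nsmul_eq_mul, mul_div_cancel₀ _ hchoose]
      exact hν.map_finset_sup_le h0 _ _)
  exact ⟨I, (mem_powersetCard.mp hI).1, (mem_powersetCard.mp hI).2, hle⟩

theorem exists_card_eq_inv_le_map_inf (hν : IsFinitelyAdditive ν) (h0 : ∀ x, 0 ≤ ν x)
    (htop : ν ⊤ = 1) {s : Finset ι} {x : ι → B} {ε : ℝ} (hx : ∀ i ∈ s, ε ≤ ν (x i)) {q : ℕ}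
    (hq : 1 ≤ q) (hqs : q ≤ ε * #s) :
    ∃ I ⊆ s, #I = q ∧ 1 / (#s * (#s).choose q) ≤ ν (I.inf x) := by
  obtain ⟨k, rfl⟩ := Nat.exists_eq_add_of_le' hq
  have hmass : ε * #s ≤ k + #s * ν (atLeast s x (k + 1)) := calc
    ε * #s ≤ ∑ i ∈ s, ν (x i) := by simpa [mul_comm] using card_nsmul_le_sum s _ ε hx
    _ = ∑ m ∈ range #s, ν (atLeast s x (m + 1)) := hν.sum_eq_sum_atLeast s x
    _ ≤ k + #s * ν (atLeast s x (k + 1)) :=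
      sum_range_le_of_antitone ((hν.monotone h0).comp_antitone (atLeast_antitone s x))
        (fun m => h0 _) (fun m => htop ▸ hν.monotone h0 le_top) #s k
  push_cast at hqs
  have hs : (0 : ℝ) < #s := by
    by_contra! h
    nlinarith [h0 (atLeast s x (k + 1))]
  have hS : 1 / (#s : ℝ) ≤ ν (atLeast s x (k + 1)) := by
    rw [div_le_iff₀ hs]; linarith
  obtain ⟨I, hIs, hI, hle⟩ :=
    hν.exists_card_eq_map_atLeast_div_le h0 ((one_div_pos.mpr hs).trans_le hS)
  refine ⟨I, hIs, hI, le_trans ?_ hle⟩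
  rw [← div_div]
  gcongr

end IsFinitelyAdditive

/-- **Borel–Cantelli-type lemma for finitely additive measures.**  For every `ε > 0` and
`q ≥ 1` there are `δ > 0` and `p ≥ 1` such that: if `ν` is a finitely additive probability
measure on a Boolean algebra `B` and `x₁,…,x_p ∈ B` all have `ν(xᵢ) ≥ ε`, then some
`q`-element subset `I ⊆ {1,…,p}` satisfies `ν(⨅_{i ∈ I} xᵢ) ≥ δ`. -/
theorem borel_cantelli_boolean_algebra :
    ∀ ε : ℝ, 0 < ε → ∀ q : ℕ, 1 ≤ q → ∃ δ : ℝ, 0 < δ ∧ ∃ p : ℕ, 1 ≤ p ∧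
      ∀ (B : Type) (_ : BooleanAlgebra B) (ν : B → ℝ),
        (∀ x, 0 ≤ ν x) → ν ⊥ = 0 → ν ⊤ = 1 →
        (∀ x y : B, x ⊓ y = ⊥ → ν (x ⊔ y) = ν x + ν y) →
        ∀ x : Fin p → B, (∀ i, ε ≤ ν (x i)) →
        ∃ I : Finset (Fin p), I.card = q ∧ δ ≤ ν (I.inf x) := by
  intro ε hε q hq
  set p := q * ⌈1 / ε⌉₊
  have hqp : q ≤ p := Nat.le_mul_of_pos_right q (Nat.ceil_pos.mpr (by positivity))
  have hqε : (q : ℝ) ≤ ε * p := by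
    have := Nat.le_ceil (1 / ε)
    calc (q : ℝ) = ε * (q * (1 / ε)) := by field_simp
      _ ≤ ε * p := by push_cast [p]; gcongr
  have hchoose : 0 < p.choose q := Nat.choose_pos hqp
  refine ⟨1 / (p * p.choose q), by positivity, p, hq.trans hqp, ?_⟩
  intro B _ ν h0 _ htop hadd x hx
  obtain ⟨I, -, hI, hle⟩ := IsFinitelyAdditive.exists_card_eq_inv_le_map_inf hadd h0 htop
    (s := univ) (fun i _ => hx i) hq (by simpa using hqε)
  exact ⟨I, hI, by simpa using hle⟩
end

section
/- Let G be a group and let A ⊆ G be a nonempty set. Then A is a coset of a subgroup of G (i.e., A = gH for some g ∈ G and some subgroup H ≤ G) if and only if A is 2-stable. -/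
open Pointwise

/-- A subset `A` of a group `G` is `d`-stable if there are no `a₁,…,a_d,b₁,…,b_d ∈ G`
with `aᵢ·bⱼ ∈ A ↔ i ≤ j`. -/
def IsStableSet {G : Type*} [Group G] (A : Set G) (d : ℕ) : Prop :=
  ¬ ∃ (a b : Fin d → G), ∀ i j : Fin d, a i * b j ∈ A ↔ i ≤ j

/-- A nonempty subset `A` of a group `G` is a coset of a subgroup of `G` if and only if it
is `2`-stable. -/
theorem coset_iff_two_stable {G : Type*} [Group G] (A : Set G) (hA : A.Nonempty) :
    (∃ (g : G) (H : Subgroup G), A = {g} * (H : Set G)) ↔ IsStableSet A 2 := by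
  constructor
  · rintro ⟨g, H, rfl⟩ ⟨a, b, hab⟩
    simp only [Set.singleton_mul, Set.image_mul_left, Set.mem_preimage,
      SetLike.mem_coe] at hab
    have h00 := (hab 0 0).2 (le_refl _)
    have h01 := (hab 0 1).2 (by decide)
    have h11 := (hab 1 1).2 (le_refl _)
    have e : g⁻¹ * (a 1 * b 0) =
        (g⁻¹ * (a 1 * b 1)) * (g⁻¹ * (a 0 * b 1))⁻¹ * (g⁻¹ * (a 0 * b 0)) := by group
    have : (1 : Fin 2) ≤ 0 :=
      (hab 1 0).1 (e ▸ mul_mem (mul_mem h11 (inv_mem h01)) h00)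
    exact absurd this (by decide)
  · intro hst
    obtain ⟨g, hg⟩ := hA
    have key : ∀ x ∈ A, ∀ y ∈ A, ∀ z ∈ A, x * y⁻¹ * z ∈ A := by
      intro x hx y hy z hz
      by_contra h
      refine hst ⟨![1, x * y⁻¹], ![z, y], ?_⟩
      intro i j
      fin_cases i <;> fin_cases j <;>
        simp only [Fin.mk_zero, Fin.mk_one, Matrix.cons_val_zero, Matrix.cons_val_one,
          Matrix.head_cons, one_mul]
      · exact iff_of_true hz (by decide)
      · exact iff_of_true hy (by decide)
      · exact iff_of_false h (by decide)
      · exact iff_of_true (by simpa [mul_assoc] using hx) (by decide)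
    have one_mem : (fun x => g * x) 1 ∈ A := by simpa using hg
    refine ⟨g, { carrier := (fun x => g * x) ⁻¹' A
                 one_mem' := one_mem
                 mul_mem' := fun {p q} hp hq => by
                   simpa [mul_assoc] using key (g * p) hp g hg (g * q) hq
                 inv_mem' := fun {p} hp => by
                   have := key g hg (g * p) hp g hg
                   have e : g * (g * p)⁻¹ * g = g * p⁻¹ := by group
                   rw [e] at this
                   exact this }, ?_⟩
    ext x
    simp only [Subgroup.coe_set_mk, Set.singleton_mul, Set.image_mul_left, Set.mem_preimage]
    constructor
    · intro hx
      simpa [mul_assoc] using hx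
    · intro hx
      simpa [mul_assoc] using hx
end
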